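/- arXiv:1106.6221 — 7 statements merged into one kernel-verified Lean document; each statement's English description precedes it below -/
import Mathlib

section
/- Let q > 1, B > 0, β ≥ 0, R > 0, and let U,V ∈ C²([0,T]) satisfy U''(t) ≥ 0 and V''(t) ≥ B(t+R)^{−β}|U(t)|^q for all t ∈ [0,T], together with U(0) ≥ 0, U'(0) > 0 and V'(0) > 0. Then for every t ∈ [0,T], U'(t)V'(t) > (B/(q+1)) (t+R)^{−β} ( U(t)^{q+1} − U(0)^{q+1} ). -/
open Real Set

lemma mono_of_deriv_aux {T : ℝ} {f f' : ℝ → ℝ}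
    (hf : ∀ t ∈ Icc (0:ℝ) T, HasDerivWithinAt f (f' t) (Icc 0 T) t)
    (h0 : ∀ t ∈ Icc (0:ℝ) T, 0 ≤ f' t) : MonotoneOn f (Icc 0 T) :=
  monotoneOn_of_hasDerivWithinAt_nonneg (convex_Icc _ _)
    (fun t ht => (hf t ht).continuousWithinAt)
    (fun t ht => (hf t (interior_subset ht)).mono interior_subset)
    (fun t ht => h0 t (interior_subset ht))

/-- Intermediate inequality in the blow-up lemma: if `U'' ≥ 0` and
`V'' ≥ B(t+R)^{-β}|U|^q` on `[0,T]`, with `U(0) ≥ 0`, `U'(0) > 0`, `V'(0) > 0`, then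
`U'(t)V'(t) > (B/(q+1))(t+R)^{-β}(U(t)^{q+1} - U(0)^{q+1})` on `[0,T]`. -/
theorem ODI_first_integration
    (q B β R T : ℝ) (U U' U'' V V' V'' : ℝ → ℝ)
    (hq : 1 < q) (hB : 0 < B) (hβ : 0 ≤ β) (hR : 0 < R)
    (hU' : ∀ t ∈ Icc (0:ℝ) T, HasDerivWithinAt U (U' t) (Icc 0 T) t)
    (hU'' : ∀ t ∈ Icc (0:ℝ) T, HasDerivWithinAt U' (U'' t) (Icc 0 T) t)
    (hUc : ContinuousOn U'' (Icc 0 T))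
    (hV' : ∀ t ∈ Icc (0:ℝ) T, HasDerivWithinAt V (V' t) (Icc 0 T) t)
    (hV'' : ∀ t ∈ Icc (0:ℝ) T, HasDerivWithinAt V' (V'' t) (Icc 0 T) t)
    (hVc : ContinuousOn V'' (Icc 0 T))
    (hU''pos : ∀ t ∈ Icc (0:ℝ) T, 0 ≤ U'' t)
    (hV''ineq : ∀ t ∈ Icc (0:ℝ) T, B * (t + R) ^ (-β) * |U t| ^ q ≤ V'' t)
    (hU0 : 0 ≤ U 0) (hU'0 : 0 < U' 0) (hV'0 : 0 < V' 0) :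
    ∀ t ∈ Icc (0:ℝ) T,
      B / (q + 1) * (t + R) ^ (-β) * (U t ^ (q + 1) - U 0 ^ (q + 1)) < U' t * V' t := by
  intro t ht
  have hT : (0:ℝ) ∈ Icc (0:ℝ) T := ⟨le_refl 0, le_trans ht.1 ht.2⟩
  -- positivity facts
  have hV''nonneg : ∀ s ∈ Icc (0:ℝ) T, 0 ≤ V'' s := by
    intro s hs
    have hsR : 0 < s + R := by linarith [hs.1]
    refine le_trans ?_ (hV''ineq s hs)
    have := Real.rpow_pos_of_pos hsR (-β)
    positivity
  have hU'mono := mono_of_deriv_aux hU'' hU''pos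
  have hU'pos : ∀ s ∈ Icc (0:ℝ) T, 0 < U' s := fun s hs =>
    lt_of_lt_of_le hU'0 (hU'mono hT hs hs.1)
  have hUmono := mono_of_deriv_aux hU' (fun s hs => (hU'pos s hs).le)
  have hUge : ∀ s ∈ Icc (0:ℝ) T, U 0 ≤ U s := fun s hs => hUmono hT hs hs.1
  have hV'mono := mono_of_deriv_aux hV'' hV''nonneg
  have hV'pos : ∀ s ∈ Icc (0:ℝ) T, 0 < V' s := fun s hs =>
    lt_of_lt_of_le hV'0 (hV'mono hT hs hs.1)
  -- the energy functional
  set F : ℝ → ℝ := fun s =>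
    U' s * V' s - B / (q + 1) * ((s + R) ^ (-β) * (U s ^ (q + 1) - U 0 ^ (q + 1))) with hF
  set F' : ℝ → ℝ := fun s =>
    (U'' s * V' s + U' s * V'' s) -
      (B / (q + 1) * ((1 * (-β) * (s + R) ^ (-β - 1)) * (U s ^ (q + 1) - U 0 ^ (q + 1))
        + (s + R) ^ (-β) * (U' s * (q + 1) * U s ^ q))) with hF'
  have hderiv : ∀ s ∈ Icc (0:ℝ) T, HasDerivWithinAt F (F' s) (Icc 0 T) s := by
    intro s hs
    have hsR0 : 0 < s + R := by linarith [hs.1]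
    have hsR : s + R ≠ 0 := ne_of_gt hsR0
    have hg : HasDerivWithinAt (fun x : ℝ => (x + R) ^ (-β))
        (1 * (-β) * (s + R) ^ (-β - 1)) (Icc 0 T) s := by
      exact (((hasDerivAt_id s).add_const R).rpow_const (Or.inl hsR)).hasDerivWithinAt
    have hW : HasDerivWithinAt (fun x : ℝ => U x ^ (q + 1))
        (U' s * (q + 1) * U s ^ q) (Icc 0 T) s := by
      have := (hU' s hs).rpow_const (p := q + 1) (Or.inr (by linarith))
      simpa [add_sub_cancel_right] using this
    have h1 := (hU'' s hs).mul (hV'' s hs)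
    have h2 := (hg.mul (hW.sub_const (U 0 ^ (q + 1)))).const_mul (B / (q + 1))
    exact h1.sub h2
  have hFnonneg : ∀ s ∈ Icc (0:ℝ) T, 0 ≤ F' s := by
    intro s hs
    have hsR0 : 0 < s + R := by linarith [hs.1]
    have hg0 : (0:ℝ) < (s + R) ^ (-β) := Real.rpow_pos_of_pos hsR0 _
    have hg1 : (0:ℝ) < (s + R) ^ (-β - 1) := Real.rpow_pos_of_pos hsR0 _
    have hUs : 0 ≤ U s := le_trans hU0 (hUge s hs)
    have hUq : (0:ℝ) ≤ U s ^ q := by positivity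
    have hDW : 0 ≤ U s ^ (q + 1) - U 0 ^ (q + 1) :=
      sub_nonneg.2 (Real.rpow_le_rpow hU0 (hUge s hs) (by linarith))
    have habs : B * (s + R) ^ (-β) * U s ^ q ≤ V'' s := by
      have := hV''ineq s hs; rwa [abs_of_nonneg hUs] at this
    have h1 : 0 ≤ U'' s * V' s := mul_nonneg (hU''pos s hs) (hV'pos s hs).le
    have h2 : 0 ≤ U' s * (V'' s - B * (s + R) ^ (-β) * U s ^ q) :=
      mul_nonneg (hU'pos s hs).le (by linarith)
    have h3 : 0 ≤ B / (q + 1) * β * (s + R) ^ (-β - 1) *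
        (U s ^ (q + 1) - U 0 ^ (q + 1)) :=
      mul_nonneg (mul_nonneg (mul_nonneg (by positivity) hβ) hg1.le) hDW
    have heq : F' s = U'' s * V' s + U' s * (V'' s - B * (s + R) ^ (-β) * U s ^ q)
        + B / (q + 1) * β * (s + R) ^ (-β - 1) * (U s ^ (q + 1) - U 0 ^ (q + 1)) := by
      simp only [hF']
      field_simp
      ring
    rw [heq]; linarith
  have hFmono := mono_of_deriv_aux hderiv hFnonneg
  have hF0 : F 0 = U' 0 * V' 0 := by simp [hF]
  have := hFmono hT ht ht.1
  have hgoal : 0 < F t := by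
    rw [hF0] at this
    exact lt_of_lt_of_le (mul_pos hU'0 hV'0) this
  simp only [hF] at hgoal
  rw [mul_assoc]
  linarith
end

section
/- Let q > 1, B > 0, β ≥ 0, R > 0, and let U,V ∈ C²([0,T]) satisfy U''(t) ≥ 0 and V''(t) ≥ B(t+R)^{−β}|U(t)|^q for all t ∈ [0,T], together with U(0) ≥ 0, U'(0) > 0, V(0) ≥ 0, V'(0) > 0. Define φ(t) = (U(t)^{q+2} − U(0)^{q+2})/(q+2) − U(0)^{q+1}(U(t) − U(0)). Then for every t ∈ (0,T], V(t) > (B/(q+1)) (t+R)^{−β} φ(t) U'(t)^{−2}. -/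
open Real Set

private lemma monoAux {a b : ℝ} {f f' : ℝ → ℝ}
    (hf : ∀ x ∈ Icc a b, HasDerivWithinAt f (f' x) (Icc a b) x)
    (h0 : ∀ x ∈ Icc a b, 0 ≤ f' x) : MonotoneOn f (Icc a b) :=
  monotoneOn_of_hasDerivWithinAt_nonneg (convex_Icc a b)
    (fun x hx => (hf x hx).continuousWithinAt)
    (fun x hx => ((hf x (interior_subset hx)).mono interior_subset))
    (fun x hx => h0 x (interior_subset hx))

/-- Second intermediate inequality in the blow-up lemma: with
`φ(t) = (U(t)^{q+2} - U(0)^{q+2})/(q+2) - U(0)^{q+1}(U(t) - U(0))`, one has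
`V(t) > (B/(q+1))(t+R)^{-β} φ(t) U'(t)^{-2}` for `t ∈ (0,T]`. -/
theorem ODI_second_integration
    (q B β R T : ℝ) (U U' U'' V V' V'' : ℝ → ℝ)
    (hq : 1 < q) (hB : 0 < B) (hβ : 0 ≤ β) (hR : 0 < R)
    (hU' : ∀ t ∈ Icc (0:ℝ) T, HasDerivWithinAt U (U' t) (Icc 0 T) t)
    (hU'' : ∀ t ∈ Icc (0:ℝ) T, HasDerivWithinAt U' (U'' t) (Icc 0 T) t)
    (hUc : ContinuousOn U'' (Icc 0 T))
    (hV' : ∀ t ∈ Icc (0:ℝ) T, HasDerivWithinAt V (V' t) (Icc 0 T) t)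
    (hV'' : ∀ t ∈ Icc (0:ℝ) T, HasDerivWithinAt V' (V'' t) (Icc 0 T) t)
    (hVc : ContinuousOn V'' (Icc 0 T))
    (hU''pos : ∀ t ∈ Icc (0:ℝ) T, 0 ≤ U'' t)
    (hV''ineq : ∀ t ∈ Icc (0:ℝ) T, B * (t + R) ^ (-β) * |U t| ^ q ≤ V'' t)
    (hU0 : 0 ≤ U 0) (hU'0 : 0 < U' 0) (hV0 : 0 ≤ V 0) (hV'0 : 0 < V' 0) :
    ∀ t ∈ Ioc (0:ℝ) T,
      B / (q + 1) * (t + R) ^ (-β)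
        * ((U t ^ (q + 2) - U 0 ^ (q + 2)) / (q + 2) - U 0 ^ (q + 1) * (U t - U 0))
        * (U' t) ^ (-(2:ℝ)) < V t := by
  intro t ht
  obtain ⟨ht0, htT⟩ := ht
  have hT : (0:ℝ) ≤ T := le_trans ht0.le htT
  have h0T : (0:ℝ) ∈ Icc 0 T := ⟨le_rfl, hT⟩
  have htI : t ∈ Icc 0 T := ⟨ht0.le, htT⟩
  have hsub : Icc (0:ℝ) t ⊆ Icc 0 T := Icc_subset_Icc le_rfl htT
  have monoU' : MonotoneOn U' (Icc 0 T) := monoAux hU'' hU''pos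
  have hU'pos : ∀ s ∈ Icc 0 T, 0 < U' s := fun s hs =>
    lt_of_lt_of_le hU'0 (monoU' h0T hs hs.1)
  have monoU : MonotoneOn U (Icc 0 T) := monoAux hU' (fun s hs => (hU'pos s hs).le)
  have hUge : ∀ s ∈ Icc 0 T, U 0 ≤ U s := fun s hs => monoU h0T hs hs.1
  have hUnn : ∀ s ∈ Icc 0 T, 0 ≤ U s := fun s hs => le_trans hU0 (hUge s hs)
  have hU't : 0 < U' t := hU'pos t htI
  have htR : 0 < t + R := by linarith
  set P := B * (t + R) ^ (-β) with hPdef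
  have hP : 0 < P := mul_pos hB (Real.rpow_pos_of_pos htR _)
  have hq1 : (0:ℝ) < q + 1 := by linarith
  have hq2 : (0:ℝ) < q + 2 := by linarith
  set c := P / ((q + 1) * U' t) with hcdef
  have hc : 0 < c := div_pos hP (mul_pos hq1 hU't)
  have hVlow : ∀ s ∈ Icc 0 t, P * U s ^ q ≤ V'' s := by
    intro s hs
    have hsT := hsub hs
    have hsR : 0 < s + R := by have := hs.1; linarith
    have h1 : (t + R) ^ (-β) ≤ (s + R) ^ (-β) :=
      Real.rpow_le_rpow_of_nonpos hsR (by linarith [hs.2]) (neg_nonpos.mpr hβ)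
    have h2 := hV''ineq s hsT
    rw [abs_of_nonneg (hUnn s hsT)] at h2
    have h3 : 0 ≤ U s ^ q := Real.rpow_nonneg (hUnn s hsT) q
    calc P * U s ^ q ≤ B * (s + R) ^ (-β) * U s ^ q :=
          mul_le_mul_of_nonneg_right (mul_le_mul_of_nonneg_left h1 hB.le) h3
      _ ≤ V'' s := h2
  -- first integration
  have key1 : ∀ s ∈ Icc 0 t, c * (U s ^ (q+1) - U 0 ^ (q+1)) ≤ V' s - V' 0 := by
    have monog : MonotoneOn (fun s => V' s - c * U s ^ (q+1)) (Icc 0 t) := by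
      apply monoAux (f' := fun s => V'' s - c * ((q+1) * U s ^ q * U' s))
      · intro s hs
        have hsT := hsub hs
        have hpow : HasDerivWithinAt (fun x => U x ^ (q+1))
            ((q+1) * U s ^ q * U' s) (Icc 0 t) s := by
          have h := (Real.hasDerivAt_rpow_const (x := U s) (p := q+1)
            (Or.inr (by linarith))).comp_hasDerivWithinAt s ((hU' s hsT).mono hsub)
          have e : q + 1 - 1 = q := by ring
          rw [e] at h
          exact h
        exact ((hV'' s hsT).mono hsub).sub (hpow.const_mul c)
      · intro s hs
        have hsT := hsub hs
        have e1 : c * ((q+1) * U s ^ q * U' s) = P * U s ^ q * (U' s / U' t) := by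
          rw [hcdef]; field_simp
        have e2 : U' s / U' t ≤ 1 := (div_le_one hU't).mpr (monoU' hsT htI hs.2)
        have h3 : 0 ≤ P * U s ^ q := mul_nonneg hP.le (Real.rpow_nonneg (hUnn s hsT) q)
        have h4 : c * ((q+1) * U s ^ q * U' s) ≤ P * U s ^ q := by
          rw [e1]; nlinarith
        have := hVlow s hs
        linarith
    intro s hs
    have h0t : (0:ℝ) ∈ Icc 0 t := ⟨le_rfl, ht0.le⟩
    have h := monog h0t hs hs.1
    simp only at h
    rw [mul_sub]
    linarith
  -- second integration
  set K := P / ((q + 1) * (U' t * U' t)) with hKdef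
  have hK : 0 < K := div_pos hP (mul_pos hq1 (mul_pos hU't hU't))
  have monoG : MonotoneOn
      (fun s => V s - V' 0 * s -
        K * ((U s ^ (q+2) - U 0 ^ (q+2))/(q+2) - U 0 ^ (q+1) * (U s - U 0)))
      (Icc 0 t) := by
    apply monoAux (f' := fun s => V' s - V' 0 - K * ((U s ^ (q+1) - U 0 ^ (q+1)) * U' s))
    · intro s hs
      have hsT := hsub hs
      have hU's := (hU' s hsT).mono hsub
      have hpow2 : HasDerivWithinAt (fun x => U x ^ (q+2))
          ((q+2) * U s ^ (q+1) * U' s) (Icc 0 t) s := by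
        have h := (Real.hasDerivAt_rpow_const (x := U s) (p := q+2)
          (Or.inr (by linarith))).comp_hasDerivWithinAt s hU's
        have e : q + 2 - 1 = q + 1 := by ring
        rw [e] at h
        exact h
      have hGder :
          HasDerivWithinAt
            (fun s => V s - V' 0 * s -
              K * ((U s ^ (q+2) - U 0 ^ (q+2))/(q+2) - U 0 ^ (q+1) * (U s - U 0)))
            (V' s - V' 0 * 1 -
              K * (((q+2) * U s ^ (q+1) * U' s)/(q+2) - U 0 ^ (q+1) * U' s))
            (Icc 0 t) s :=
        (((hV' s hsT).mono hsub).sub ((hasDerivWithinAt_id s _).const_mul (V' 0))).sub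
          ((((hpow2.sub_const _).div_const (q+2)).sub
            ((hU's.sub_const _).const_mul (U 0 ^ (q+1)))).const_mul K)
      convert hGder using 1
      field_simp
    · intro s hs
      have hsT := hsub hs
      have hD : 0 ≤ U s ^ (q+1) - U 0 ^ (q+1) :=
        sub_nonneg.mpr (Real.rpow_le_rpow hU0 (hUge s hsT) (by linarith))
      have h1 := key1 s hs
      have e : K * ((U s ^ (q+1) - U 0 ^ (q+1)) * U' s)
          = c * (U s ^ (q+1) - U 0 ^ (q+1)) * (U' s / U' t) := by
        rw [hKdef, hcdef]; field_simp
      have e2 : U' s / U' t ≤ 1 := (div_le_one hU't).mpr (monoU' hsT htI hs.2)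
      have h3 : 0 ≤ c * (U s ^ (q+1) - U 0 ^ (q+1)) := mul_nonneg hc.le hD
      have h4 : K * ((U s ^ (q+1) - U 0 ^ (q+1)) * U' s)
          ≤ c * (U s ^ (q+1) - U 0 ^ (q+1)) := by
        rw [e]; nlinarith
      linarith
  have h0t : (0:ℝ) ∈ Icc 0 t := ⟨le_rfl, ht0.le⟩
  have htt : t ∈ Icc 0 t := ⟨ht0.le, le_rfl⟩
  have hfin := monoG h0t htt ht0.le
  simp only [mul_zero, sub_self, zero_div, zero_mul, sub_zero] at hfin
  have h2 : (U' t) ^ (-(2:ℝ)) = (U' t * U' t)⁻¹ := by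
    rw [Real.rpow_neg hU't.le, show (2:ℝ) = ((2:ℕ):ℝ) by norm_num,
      Real.rpow_natCast, pow_two]
  rw [h2]
  have hEq : ∀ x : ℝ, B / (q + 1) * (t + R) ^ (-β) * x * (U' t * U' t)⁻¹ = K * x := by
    intro x
    rw [hKdef, hPdef]
    field_simp
  rw [hEq]
  have hVt0 : 0 < V' 0 * t := mul_pos hV'0 ht0
  linarith
end

section
/- Let q > 1 and let U ∈ C²([0,T]) satisfy U''(t) ≥ 0 on [0,T], U(0) ≥ 0 and U'(0) > 0. Define φ(t) = (U(t)^{q+2} − U(0)^{q+2})/(q+2) − U(0)^{q+1}(U(t) − U(0)). Then φ(t) ≥ U(t)^{q+2} / (4(q+2)²) for all t ∈ [0,T] with t ≥ (2q+3)U(0)/U'(0). -/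
open Real Set

/-!
Since `U'' ≥ 0`, `U'` is nondecreasing, so `U` lies above its tangent line at `0`:
`U t ≥ U 0 + U' 0 * t`. For `t ≥ (2q+3) U(0)/U'(0)` this gives `U t ≥ 2(q+2) U(0)`, and then
`U(0)^{q+1} U(t) ≤ U(t)^{q+2}/(2(q+2))^{q+1} ≤ U(t)^{q+2}/(4(q+2)²)`, which absorbs the
negative term of `φ`.
-/

theorem monotoneOn_of_forall_hasDerivWithinAt_nonneg {D : Set ℝ} (hD : Convex ℝ D)
    {f f' : ℝ → ℝ} (hf : ∀ x ∈ D, HasDerivWithinAt f (f' x) D x) (hf' : ∀ x ∈ D, 0 ≤ f' x) :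
    MonotoneOn f D :=
  monotoneOn_of_hasDerivWithinAt_nonneg hD (fun x hx ↦ (hf x hx).continuousWithinAt)
    (fun x hx ↦ (hf x (interior_subset hx)).mono interior_subset)
    (fun x hx ↦ hf' x (interior_subset hx))

theorem tangent_le_of_monotoneOn_derivWithin {f f' : ℝ → ℝ} {a b t : ℝ}
    (hf : ∀ x ∈ Icc a b, HasDerivWithinAt f (f' x) (Icc a b) x) (hf' : MonotoneOn f' (Icc a b))
    (ht : t ∈ Icc a b) :
    f a + f' a * (t - a) ≤ f t := by
  have ha : a ∈ Icc a b := ⟨le_rfl, ht.1.trans ht.2⟩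
  have hmono : MonotoneOn (fun x ↦ f x - f' a * x) (Icc a b) :=
    monotoneOn_of_forall_hasDerivWithinAt_nonneg (convex_Icc a b)
      (fun x hx ↦ (hf x hx).sub ((hasDerivWithinAt_id x _).const_mul (f' a)))
      (fun x hx ↦ by simpa using hf' ha hx hx.1)
  have := hmono ha ht ht.1
  simp only at this
  linarith

theorem rpow_add_one_mul_le {q a u : ℝ} (hq : 1 ≤ q) (ha : 0 ≤ a) (hau : 2 * (q + 2) * a ≤ u) :
    a ^ (q + 1) * u ≤ u ^ (q + 2) / (4 * (q + 2) ^ 2) := by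
  have hu : 0 ≤ u := le_trans (by positivity) hau
  have hK : 0 < 2 * (q + 2) := by linarith
  have hpow : (2 * (q + 2)) ^ (2 : ℝ) ≤ (2 * (q + 2)) ^ (q + 1) :=
    rpow_le_rpow_of_exponent_le (by linarith) (by linarith)
  rw [rpow_two] at hpow
  calc a ^ (q + 1) * u ≤ (u / (2 * (q + 2))) ^ (q + 1) * u := by
        gcongr
        rwa [le_div_iff₀ hK, mul_comm]
    _ = u ^ (q + 2) / (2 * (q + 2)) ^ (q + 1) := by
        rw [div_rpow hu hK.le, div_mul_eq_mul_div, ← rpow_add_one' hu (by linarith)]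
        ring_nf
    _ ≤ u ^ (q + 2) / (4 * (q + 2) ^ 2) := by
        gcongr
        linarith

theorem rpow_add_two_sub_le {q a u : ℝ} (hq : 1 ≤ q) (ha : 0 ≤ a) (hau : 2 * (q + 2) * a ≤ u) :
    u ^ (q + 2) / (4 * (q + 2) ^ 2)
      ≤ (u ^ (q + 2) - a ^ (q + 2)) / (q + 2) - a ^ (q + 1) * (u - a) := by
  have hcross := rpow_add_one_mul_le hq ha hau
  have hp : 0 < q + 2 := by linarith
  have hsplit : a ^ (q + 2) = a ^ (q + 1) * a := by
    rw [← rpow_add_one' ha (by linarith)]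
    ring_nf
  have hX : 0 ≤ u ^ (q + 2) := rpow_nonneg (le_trans (by positivity) hau) _
  have hA : 0 ≤ a ^ (q + 1) * a := by positivity
  have hhalf : 2 * (u ^ (q + 2) / (4 * (q + 2) ^ 2)) ≤ u ^ (q + 2) / (q + 2) := by
    rw [← mul_div_assoc, div_le_div_iff₀ (by positivity) hp]
    have hden : 2 * (q + 2) ≤ 4 * (q + 2) ^ 2 := by nlinarith
    nlinarith [mul_le_mul_of_nonneg_left hden hX]
  have hdrop : a ^ (q + 1) * a / (q + 2) ≤ a ^ (q + 1) * a := div_le_self hA (by linarith)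
  rw [hsplit, sub_div]
  linarith

theorem phi_lower_bound_general
    (q T : ℝ) (U U' U'' : ℝ → ℝ)
    (hq : 1 < q)
    (hU' : ∀ t ∈ Icc (0:ℝ) T, HasDerivWithinAt U (U' t) (Icc 0 T) t)
    (hU'' : ∀ t ∈ Icc (0:ℝ) T, HasDerivWithinAt U' (U'' t) (Icc 0 T) t)
    (hU''pos : ∀ t ∈ Icc (0:ℝ) T, 0 ≤ U'' t)
    (hU0 : 0 ≤ U 0) (hU'0 : 0 < U' 0) :
    ∀ t ∈ Icc (0:ℝ) T, (2 * q + 3) * U 0 / U' 0 ≤ t →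
      U t ^ (q + 2) / (4 * (q + 2) ^ 2)
        ≤ (U t ^ (q + 2) - U 0 ^ (q + 2)) / (q + 2) - U 0 ^ (q + 1) * (U t - U 0) := by
  intro t ht hlarge
  have hU'mono : MonotoneOn U' (Icc 0 T) :=
    monotoneOn_of_forall_hasDerivWithinAt_nonneg (convex_Icc 0 T) hU'' hU''pos
  have htangent := tangent_le_of_monotoneOn_derivWithin hU' hU'mono ht
  have hslope : (2 * q + 3) * U 0 ≤ U' 0 * t := by
    rwa [div_le_iff₀ hU'0, mul_comm t] at hlarge
  exact rpow_add_two_sub_le hq.le hU0 (by linarith)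

/-- Lower bound for the auxiliary function
`φ(t) = (U(t)^{q+2} - U(0)^{q+2})/(q+2) - U(0)^{q+1}(U(t) - U(0))`:
if `U'' ≥ 0`, `U(0) ≥ 0`, `U'(0) > 0`, then `φ(t) ≥ U(t)^{q+2}/(4(q+2)²)` for
`t ∈ [0,T]` with `t ≥ (2q+3)U(0)/U'(0)`. -/
theorem phi_lower_bound
    (q T : ℝ) (U U' U'' : ℝ → ℝ)
    (hq : 1 < q)
    (hU' : ∀ t ∈ Icc (0:ℝ) T, HasDerivWithinAt U (U' t) (Icc 0 T) t)
    (hU'' : ∀ t ∈ Icc (0:ℝ) T, HasDerivWithinAt U' (U'' t) (Icc 0 T) t)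
    (hUc : ContinuousOn U'' (Icc 0 T))
    (hU''pos : ∀ t ∈ Icc (0:ℝ) T, 0 ≤ U'' t)
    (hU0 : 0 ≤ U 0) (hU'0 : 0 < U' 0) :
    ∀ t ∈ Icc (0:ℝ) T, (2 * q + 3) * U 0 / U' 0 ≤ t →
      U t ^ (q + 2) / (4 * (q + 2) ^ 2)
        ≤ (U t ^ (q + 2) - U 0 ^ (q + 2)) / (q + 2) - U 0 ^ (q + 1) * (U t - U 0) :=
  phi_lower_bound_general q T U U' U'' hq hU' hU'' hU''pos hU0 hU'0
end

section
/- Let p,q > 1, A,B > 0, α,β ≥ 0, R > 0, and let U,V ∈ C²([0,T]) satisfy U''(t) ≥ A(t+R)^{−α}|V(t)|^p and V''(t) ≥ B(t+R)^{−β}|U(t)|^q for all t ∈ [0,T], together with U(0) ≥ 0, U'(0) > 0, V(0) ≥ 0, V'(0) > 0. Then for every t ∈ [0,T] with t ≥ (2q+3)U(0)/U'(0), U'(t) > [ 2A/(4(q+2)²)^{p+1} · (B/(q+1))^p ]^{1/(2p+2)} (t+R)^{−(α+pβ)/(2p+2)} U(t)^{(pq+2p+1)/(2p+2)}. -/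
open Real Set

/-!
Fix `t` and freeze the weights at their smallest values `(t + R)^(-α)`, `(t + R)^(-β)` on `[0, t]`.
There `W = U - U 0` and `V` satisfy the constant-coefficient system `W'' ≥ a V^p`, `V'' ≥ b W^q`
with `W, W', V, V' ≥ 0` (convexity), and comparing derivatives three times gives
`V' W' ≥ b W^(q+1) / (q+1)`, then `V W'^2 ≥ b W^(q+2) / ((q+1)(q+2))`, and finally, since
`(W'^(2p+2))' ≥ (2p+2) a W' (V W'^2)^p`, a lower bound for `W'^(2p+2)` by a multiple of `W^(pq+2p+1)`.
The threshold on `t` gives `U t ≤ (2q+4)/(2q+3) · W t`, and the loss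
`((2q+4)/(2q+3))^(pq+2p+1) ≤ e^(p+1) ≤ 4^(p+1)` is absorbed into the constant.
-/

section Comparison

variable {a b : ℝ}

theorem le_of_hasDerivWithinAt_le_Icc {f f' g g' : ℝ → ℝ}
    (hf : ∀ x ∈ Icc a b, HasDerivWithinAt f (f' x) (Icc a b) x)
    (hg : ∀ x ∈ Icc a b, HasDerivWithinAt g (g' x) (Icc a b) x)
    (ha : f a ≤ g a) (hle : ∀ x ∈ Icc a b, f' x ≤ g' x) :
    ∀ x ∈ Icc a b, f x ≤ g x := by
  have toIci : ∀ {h h' : ℝ → ℝ}, (∀ x ∈ Icc a b, HasDerivWithinAt h (h' x) (Icc a b) x) →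
      ∀ x ∈ Ico a b, HasDerivWithinAt h (h' x) (Ici x) x := fun hh x hx =>
    (hh x (Ico_subset_Icc_self hx)).mono_of_mem_nhdsWithin
      (Filter.mem_of_superset (Icc_mem_nhdsGE hx.2) (Icc_subset_Icc_left hx.1))
  exact image_le_of_deriv_right_le_deriv_boundary
    (fun x hx => (hf x hx).continuousWithinAt) (toIci hf) ha
    (fun x hx => (hg x hx).continuousWithinAt) (toIci hg)
    (fun x hx => hle x (Ico_subset_Icc_self hx))

theorem tangent_le_of_deriv2_nonneg {f f' f'' : ℝ → ℝ}
    (hf : ∀ x ∈ Icc a b, HasDerivWithinAt f (f' x) (Icc a b) x)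
    (hf' : ∀ x ∈ Icc a b, HasDerivWithinAt f' (f'' x) (Icc a b) x)
    (hf'' : ∀ x ∈ Icc a b, 0 ≤ f'' x) :
    ∀ x ∈ Icc a b, f' a ≤ f' x ∧ f a + (x - a) * f' a ≤ f x := by
  have hmono : ∀ x ∈ Icc a b, f' a ≤ f' x :=
    le_of_hasDerivWithinAt_le_Icc (fun x _ => hasDerivWithinAt_const x _ (f' a)) hf' le_rfl
      (fun x hx => hf'' x hx)
  refine fun x hx => ⟨hmono x hx, ?_⟩
  refine le_of_hasDerivWithinAt_le_Icc (f := fun x => f a + (x - a) * f' a)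
    (f' := fun _ => f' a) (fun x _ => ?_) hf (by simp) hmono x hx
  simpa using ((hasDerivWithinAt_id x _).sub_const a).mul_const (f' a) |>.const_add (f a)

end Comparison

section Integration

variable {a b C r : ℝ} {F F' W W' : ℝ → ℝ}

theorem rpow_add_one_le_of_deriv_ge (hr : 0 ≤ r)
    (hF : ∀ x ∈ Icc a b, HasDerivWithinAt F (F' x) (Icc a b) x)
    (hW : ∀ x ∈ Icc a b, HasDerivWithinAt W (W' x) (Icc a b) x)
    (hFa : 0 ≤ F a) (hWa : W a = 0) (hF' : ∀ x ∈ Icc a b, C * W x ^ r * W' x ≤ F' x) :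
    ∀ x ∈ Icc a b, C / (r + 1) * W x ^ (r + 1) ≤ F x := by
  have hr1 : r + 1 ≠ 0 := by positivity
  refine le_of_hasDerivWithinAt_le_Icc
    (fun x hx => ((hW x hx).rpow_const (by simp [hr])).const_mul _) hF (by simpa [hWa, zero_rpow hr1] using hFa) (fun x hx => ?_)
  convert hF' x hx using 1
  rw [add_sub_cancel_right]
  field_simp

end Integration

section System

variable {a b p q A B : ℝ} {W W' W'' V V' V'' : ℝ → ℝ}

theorem mul_rpow_add_one_le_deriv_mul_deriv (hq : 0 ≤ q)
    (hW : ∀ x ∈ Icc a b, HasDerivWithinAt W (W' x) (Icc a b) x)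
    (hW' : ∀ x ∈ Icc a b, HasDerivWithinAt W' (W'' x) (Icc a b) x)
    (hV' : ∀ x ∈ Icc a b, HasDerivWithinAt V' (V'' x) (Icc a b) x)
    (hWa : W a = 0) (hW'_nonneg : ∀ x ∈ Icc a b, 0 ≤ W' x)
    (hW''_nonneg : ∀ x ∈ Icc a b, 0 ≤ W'' x) (hV'_nonneg : ∀ x ∈ Icc a b, 0 ≤ V' x)
    (hV'' : ∀ x ∈ Icc a b, B * W x ^ q ≤ V'' x) :
    ∀ x ∈ Icc a b, B / (q + 1) * W x ^ (q + 1) ≤ V' x * W' x := by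
  intro x hx
  have ha : a ∈ Icc a b := ⟨le_rfl, hx.1.trans hx.2⟩
  refine rpow_add_one_le_of_deriv_ge hq (fun x hx => (hV' x hx).mul (hW' x hx)) hW
    (mul_nonneg (hV'_nonneg a ha) (hW'_nonneg a ha)) hWa (fun y hy => ?_) x hx
  have := mul_le_mul_of_nonneg_right (hV'' y hy) (hW'_nonneg y hy)
  nlinarith [mul_nonneg (hV'_nonneg y hy) (hW''_nonneg y hy)]

theorem mul_rpow_add_two_le_mul_deriv_sq (hq : 0 ≤ q)
    (hW : ∀ x ∈ Icc a b, HasDerivWithinAt W (W' x) (Icc a b) x)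
    (hW' : ∀ x ∈ Icc a b, HasDerivWithinAt W' (W'' x) (Icc a b) x)
    (hV : ∀ x ∈ Icc a b, HasDerivWithinAt V (V' x) (Icc a b) x)
    (hWa : W a = 0) (hW'_nonneg : ∀ x ∈ Icc a b, 0 ≤ W' x)
    (hW''_nonneg : ∀ x ∈ Icc a b, 0 ≤ W'' x) (hV_nonneg : ∀ x ∈ Icc a b, 0 ≤ V x)
    (hV'W' : ∀ x ∈ Icc a b, B / (q + 1) * W x ^ (q + 1) ≤ V' x * W' x) :
    ∀ x ∈ Icc a b, B / ((q + 1) * (q + 2)) * W x ^ (q + 2) ≤ V x * W' x ^ 2 := by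
  intro x hx
  have ha : a ∈ Icc a b := ⟨le_rfl, hx.1.trans hx.2⟩
  have key := rpow_add_one_le_of_deriv_ge (C := B / (q + 1)) (r := q + 1) (by positivity)
    (fun x hx => (hV x hx).mul ((hW' x hx).pow 2)) hW
    (mul_nonneg (hV_nonneg a ha) (sq_nonneg _)) hWa (fun y hy => ?_) x hx
  · convert key using 2
    · field_simp; ring
    · ring_nf
    · simp
  have := mul_le_mul_of_nonneg_right (hV'W' y hy) (hW'_nonneg y hy)
  have := mul_nonneg (hV_nonneg y hy) (mul_nonneg (hW'_nonneg y hy) (hW''_nonneg y hy))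
  simp only [Nat.cast_ofNat, Nat.add_one_sub_one, pow_one, Pi.pow_apply]
  nlinarith

theorem deriv_rpow_lower_bound_of_system (hp : 0 ≤ p) (hq : 0 ≤ q) (hA : 0 ≤ A) (hB : 0 ≤ B)
    (hW : ∀ x ∈ Icc a b, HasDerivWithinAt W (W' x) (Icc a b) x)
    (hW' : ∀ x ∈ Icc a b, HasDerivWithinAt W' (W'' x) (Icc a b) x)
    (hV : ∀ x ∈ Icc a b, HasDerivWithinAt V (V' x) (Icc a b) x)
    (hV' : ∀ x ∈ Icc a b, HasDerivWithinAt V' (V'' x) (Icc a b) x)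
    (hWa : W a = 0) (hW_nonneg : ∀ x ∈ Icc a b, 0 ≤ W x) (hW'_nonneg : ∀ x ∈ Icc a b, 0 ≤ W' x)
    (hV_nonneg : ∀ x ∈ Icc a b, 0 ≤ V x) (hV'_nonneg : ∀ x ∈ Icc a b, 0 ≤ V' x)
    (hW'' : ∀ x ∈ Icc a b, A * V x ^ p ≤ W'' x) (hV'' : ∀ x ∈ Icc a b, B * W x ^ q ≤ V'' x) :
    ∀ x ∈ Icc a b, W' a ^ (2 * p + 2)
      + (2 * p + 2) * A * (B / ((q + 1) * (q + 2))) ^ p / (p * q + 2 * p + 1)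
        * W x ^ (p * q + 2 * p + 1) ≤ W' x ^ (2 * p + 2) := by
  have hW''_nonneg : ∀ x ∈ Icc a b, 0 ≤ W'' x := fun x hx =>
    (mul_nonneg hA (rpow_nonneg (hV_nonneg x hx) p)).trans (hW'' x hx)
  have hVW'sq := mul_rpow_add_two_le_mul_deriv_sq hq hW hW' hV hWa hW'_nonneg hW''_nonneg
    hV_nonneg (mul_rpow_add_one_le_deriv_mul_deriv hq hW hW' hV' hWa hW'_nonneg hW''_nonneg
      hV'_nonneg hV'')
  intro x hx
  have hrpow := rpow_add_one_le_of_deriv_ge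
    (C := (2 * p + 2) * A * (B / ((q + 1) * (q + 2))) ^ p) (r := (q + 2) * p) (by positivity)
    (F := fun x => W' x ^ (2 * p + 2) - W' a ^ (2 * p + 2))
    (fun x hx => ((hW' x hx).rpow_const (by right; linarith)).sub_const _) hW (by simp) hWa
    (fun y hy => ?_) x hx
  · rw [show (q + 2) * p + 1 = p * q + 2 * p + 1 by ring] at hrpow
    linarith
  set D := B / ((q + 1) * (q + 2))
  have hWy := hW_nonneg y hy
  have hW'y := hW'_nonneg y hy
  have hpow : D ^ p * W y ^ ((q + 2) * p) ≤ (V y * W' y ^ 2) ^ p := by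
    rw [rpow_mul hWy, ← mul_rpow (by positivity) (rpow_nonneg hWy _)]
    exact rpow_le_rpow (by positivity) (hVW'sq y hy) hp
  have hsplit : (V y * W' y ^ 2) ^ p * W' y = V y ^ p * W' y ^ (2 * p + 2 - 1) := by
    rw [mul_rpow (hV_nonneg y hy) (sq_nonneg _), ← rpow_natCast, ← rpow_mul hW'y,
      show 2 * p + 2 - 1 = (2 : ℕ) * p + 1 by push_cast; ring,
      rpow_add' hW'y (by positivity), rpow_one]
    ring
  calc (2 * p + 2) * A * D ^ p * W y ^ ((q + 2) * p) * W' y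
      = (2 * p + 2) * A * (D ^ p * W y ^ ((q + 2) * p) * W' y) := by ring
    _ ≤ (2 * p + 2) * A * ((V y * W' y ^ 2) ^ p * W' y) := by gcongr
    _ = (2 * p + 2) * W' y ^ (2 * p + 2 - 1) * (A * V y ^ p) := by rw [hsplit]; ring
    _ ≤ (2 * p + 2) * W' y ^ (2 * p + 2 - 1) * W'' y := by gcongr; exact hW'' y hy
    _ = W'' y * (2 * p + 2) * W' y ^ (2 * p + 2 - 1) := by ring

end System

section Constants

variable {p q A B : ℝ}

theorem rpow_le_four_rpow (hp : 0 ≤ p) (hq : 0 ≤ q) :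
    ((2 * q + 4) / (2 * q + 3)) ^ (p * q + 2 * p + 1) ≤ 4 ^ (p + 1) := by
  have hq3 : 0 < 2 * q + 3 := by linarith
  calc ((2 * q + 4) / (2 * q + 3)) ^ (p * q + 2 * p + 1)
      ≤ exp (1 / (2 * q + 3)) ^ (p * q + 2 * p + 1) := by
        gcongr
        calc (2 * q + 4) / (2 * q + 3) = 1 / (2 * q + 3) + 1 := by field_simp; ring
          _ ≤ exp (1 / (2 * q + 3)) := add_one_le_exp _
    _ = exp 1 ^ ((p * q + 2 * p + 1) / (2 * q + 3)) := by
        rw [← exp_mul, exp_one_rpow]; ring_nf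
    _ ≤ exp 1 ^ (p + 1) := by
        gcongr
        · exact one_le_exp zero_le_one
        · rw [div_le_iff₀ hq3]; nlinarith
    _ ≤ 4 ^ (p + 1) := by gcongr; linarith [exp_one_lt_d9]

theorem blowup_const_le (hp : 0 ≤ p) (hq : 0 ≤ q) (hA : 0 ≤ A) (hB : 0 ≤ B) :
    2 * A / (4 * (q + 2) ^ 2) ^ (p + 1) * (B / (q + 1)) ^ p
        * ((2 * q + 4) / (2 * q + 3)) ^ (p * q + 2 * p + 1)
      ≤ (2 * p + 2) * A * (B / ((q + 1) * (q + 2))) ^ p / (p * q + 2 * p + 1) := by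
  have hq2 : 0 < q + 2 := by linarith
  have hfour : (4 * (q + 2) ^ 2) ^ (p + 1) = 4 ^ (p + 1) * ((q + 2) ^ (p + 2) * (q + 2) ^ p) := by
    rw [mul_rpow (by norm_num) (by positivity), ← rpow_natCast, ← rpow_mul hq2.le,
      ← rpow_add hq2]
    push_cast; ring_nf
  have hsplit : (B / ((q + 1) * (q + 2))) ^ p = (B / (q + 1)) ^ p / (q + 2) ^ p := by
    rw [← div_div, div_rpow (by positivity) hq2.le]
  have hm : p * q + 2 * p + 1 ≤ (p + 1) * (q + 2) ^ (p + 2) := by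
    have := self_le_rpow_of_one_le (x := q + 2) (y := p + 2) (by linarith) (by linarith)
    nlinarith
  have hr := rpow_le_four_rpow hp hq
  have hm0 : 0 < p * q + 2 * p + 1 := by positivity
  rw [hfour, hsplit]
  set E := (B / (q + 1)) ^ p
  set Q := (q + 2) ^ p
  set Z := (q + 2) ^ (p + 2)
  have hE : 0 ≤ E := by positivity
  have hQ : 0 < Q := by positivity
  have hZ : 0 < Z := by positivity
  have hF : (0 : ℝ) < 4 ^ (p + 1) := by positivity
  calc 2 * A / (4 ^ (p + 1) * (Z * Q)) * E * ((2 * q + 4) / (2 * q + 3)) ^ (p * q + 2 * p + 1)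
      = 2 * A * E / (Z * Q) * (((2 * q + 4) / (2 * q + 3)) ^ (p * q + 2 * p + 1) / 4 ^ (p + 1)) := by
        field_simp
    _ ≤ 2 * A * E / (Z * Q) * 1 := by gcongr; exact (div_le_one hF).2 hr
    _ ≤ (2 * p + 2) * A * (E / Q) / (p * q + 2 * p + 1) := by
        rw [mul_one, div_le_div_iff₀ (by positivity) hm0]
        field_simp
        nlinarith [mul_nonneg hA hE]

end Constants

theorem mul_rpow_neg_mul_rpow_le {A R δ e s t x y : ℝ} (hA : 0 ≤ A) (hδ : 0 ≤ δ) (he : 0 ≤ e)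
    (hs : 0 < s + R) (hst : s ≤ t) (hx : 0 ≤ x) (hxy : x ≤ |y|) :
    A * (t + R) ^ (-δ) * x ^ e ≤ A * (s + R) ^ (-δ) * |y| ^ e := by
  have hweight : (t + R) ^ (-δ) ≤ (s + R) ^ (-δ) :=
    rpow_le_rpow_of_nonpos hs (by linarith) (by linarith)
  gcongr

theorem mul_rpow_le_of_le_mul {K c r u v m : ℝ} (hK : 0 ≤ K) (hu : 0 ≤ u) (hv : 0 ≤ v)
    (hr : 0 ≤ r) (hm : 0 ≤ m) (huv : u ≤ r * v) (hc : K * r ^ m ≤ c) :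
    K * u ^ m ≤ c * v ^ m := by
  calc K * u ^ m ≤ K * (r * v) ^ m := by gcongr
    _ = K * r ^ m * v ^ m := by rw [mul_rpow hr hv, mul_assoc]
    _ ≤ c * v ^ m := by gcongr

theorem rpow_inv_mul_lt_of_lt_rpow {K w u y γ m n : ℝ} (hK : 0 ≤ K) (hw : 0 < w) (hu : 0 ≤ u)
    (hy : 0 ≤ y) (hn : 0 < n) (h : K * w ^ (-γ) * u ^ m < y ^ n) :
    K ^ n⁻¹ * w ^ (-(γ / n)) * u ^ (m / n) < y := by
  rw [← neg_div, div_eq_mul_inv, div_eq_mul_inv, rpow_mul hu, rpow_mul hw.le,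
    ← mul_rpow hK (rpow_nonneg hw.le _), ← mul_rpow (by positivity) (rpow_nonneg hu _)]
  exact (rpow_inv_lt_iff_of_pos (by positivity) hy hn).2 h

theorem deriv_rpow_lower_bound_of_weighted_system {p q A B α β R T : ℝ}
    {U U' U'' V V' V'' : ℝ → ℝ} (hp : 0 ≤ p) (hq : 0 ≤ q) (hA : 0 ≤ A) (hB : 0 ≤ B)
    (hα : 0 ≤ α) (hβ : 0 ≤ β) (hR : 0 < R)
    (hU' : ∀ t ∈ Icc (0:ℝ) T, HasDerivWithinAt U (U' t) (Icc 0 T) t)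
    (hU'' : ∀ t ∈ Icc (0:ℝ) T, HasDerivWithinAt U' (U'' t) (Icc 0 T) t)
    (hV' : ∀ t ∈ Icc (0:ℝ) T, HasDerivWithinAt V (V' t) (Icc 0 T) t)
    (hV'' : ∀ t ∈ Icc (0:ℝ) T, HasDerivWithinAt V' (V'' t) (Icc 0 T) t)
    (hU''ineq : ∀ t ∈ Icc (0:ℝ) T, A * (t + R) ^ (-α) * |V t| ^ p ≤ U'' t)
    (hV''ineq : ∀ t ∈ Icc (0:ℝ) T, B * (t + R) ^ (-β) * |U t| ^ q ≤ V'' t)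
    (hU0 : 0 ≤ U 0) (hU'0 : 0 ≤ U' 0) (hV0 : 0 ≤ V 0) (hV'0 : 0 ≤ V' 0) :
    ∀ t ∈ Icc (0:ℝ) T, U' 0 ^ (2 * p + 2)
      + (2 * p + 2) * A * (B / ((q + 1) * (q + 2))) ^ p / (p * q + 2 * p + 1)
        * (t + R) ^ (-(α + p * β)) * (U t - U 0) ^ (p * q + 2 * p + 1)
      ≤ U' t ^ (2 * p + 2) := by
  intro t ht
  have hsub : Icc 0 t ⊆ Icc 0 T := Icc_subset_Icc_right ht.2
  have hw : 0 < t + R := by linarith [ht.1]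
  have hU_tangent := tangent_le_of_deriv2_nonneg hU' hU'' fun s hs =>
    le_trans (by have := hs.1; positivity) (hU''ineq s hs)
  have hV_tangent := tangent_le_of_deriv2_nonneg hV' hV'' fun s hs =>
    le_trans (by have := hs.1; positivity) (hV''ineq s hs)
  have hW_nonneg : ∀ s ∈ Icc 0 T, 0 ≤ U s - U 0 := fun s hs => by
    nlinarith [(hU_tangent s hs).2, hs.1]
  have hV_nonneg : ∀ s ∈ Icc 0 T, 0 ≤ V s := fun s hs => by
    nlinarith [(hV_tangent s hs).2, hs.1]
  have key := deriv_rpow_lower_bound_of_system (a := 0) (b := t) (W := fun s => U s - U 0)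
    (p := p) (q := q) (A := A * (t + R) ^ (-α)) (B := B * (t + R) ^ (-β)) hp hq
    (by positivity) (by positivity)
    (fun s hs => ((hU' s (hsub hs)).mono hsub).sub_const _)
    (fun s hs => (hU'' s (hsub hs)).mono hsub)
    (fun s hs => (hV' s (hsub hs)).mono hsub) (fun s hs => (hV'' s (hsub hs)).mono hsub)
    (sub_self _) (fun s hs => hW_nonneg s (hsub hs))
    (fun s hs => by linarith [(hU_tangent s (hsub hs)).1])
    (fun s hs => hV_nonneg s (hsub hs))
    (fun s hs => by linarith [(hV_tangent s (hsub hs)).1])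
    (fun s hs => (mul_rpow_neg_mul_rpow_le hA hα hp (by linarith [hs.1]) hs.2
      (hV_nonneg s (hsub hs)) (le_abs_self _)).trans (hU''ineq s (hsub hs)))
    (fun s hs => (mul_rpow_neg_mul_rpow_le hB hβ hq (by linarith [hs.1]) hs.2
      (hW_nonneg s (hsub hs)) (by linarith [le_abs_self (U s)])).trans (hV''ineq s (hsub hs)))
    t ⟨ht.1, le_rfl⟩
  have hweight : (2 * p + 2) * (A * (t + R) ^ (-α))
        * (B * (t + R) ^ (-β) / ((q + 1) * (q + 2))) ^ p / (p * q + 2 * p + 1)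
      = (2 * p + 2) * A * (B / ((q + 1) * (q + 2))) ^ p / (p * q + 2 * p + 1)
        * (t + R) ^ (-(α + p * β)) := by
    rw [mul_div_right_comm B, mul_rpow (by positivity) (rpow_nonneg hw.le _), ← rpow_mul hw.le,
      show -(α + p * β) = -α + -β * p by ring, rpow_add hw]
    ring
  rwa [hweight] at key

theorem ODI_key_inequality_general
    (p q A B α β R T : ℝ) (U U' U'' V V' V'' : ℝ → ℝ)
    (hp : 1 < p) (hq : 1 < q) (hA : 0 < A) (hB : 0 < B)
    (hα : 0 ≤ α) (hβ : 0 ≤ β) (hR : 0 < R)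
    (hU' : ∀ t ∈ Icc (0:ℝ) T, HasDerivWithinAt U (U' t) (Icc 0 T) t)
    (hU'' : ∀ t ∈ Icc (0:ℝ) T, HasDerivWithinAt U' (U'' t) (Icc 0 T) t)
    (hV' : ∀ t ∈ Icc (0:ℝ) T, HasDerivWithinAt V (V' t) (Icc 0 T) t)
    (hV'' : ∀ t ∈ Icc (0:ℝ) T, HasDerivWithinAt V' (V'' t) (Icc 0 T) t)
    (hU''ineq : ∀ t ∈ Icc (0:ℝ) T, A * (t + R) ^ (-α) * |V t| ^ p ≤ U'' t)
    (hV''ineq : ∀ t ∈ Icc (0:ℝ) T, B * (t + R) ^ (-β) * |U t| ^ q ≤ V'' t)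
    (hU0 : 0 ≤ U 0) (hU'0 : 0 < U' 0) (hV0 : 0 ≤ V 0) (hV'0 : 0 < V' 0) :
    ∀ t ∈ Icc (0:ℝ) T, (2 * q + 3) * U 0 / U' 0 ≤ t →
      (2 * A / (4 * (q + 2) ^ 2) ^ (p + 1) * (B / (q + 1)) ^ p) ^ ((2 * p + 2)⁻¹)
        * (t + R) ^ (-((α + p * β) / (2 * p + 2)))
        * U t ^ ((p * q + 2 * p + 1) / (2 * p + 2)) < U' t := by
  intro t ht hthr
  have key := deriv_rpow_lower_bound_of_weighted_system (by linarith) (by linarith) hA.le hB.le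
    hα hβ hR hU' hU'' hV' hV'' hU''ineq hV''ineq hU0 hU'0.le hV0 hV'0.le t ht
  obtain ⟨hU't, hU_tangent⟩ := tangent_le_of_deriv2_nonneg hU' hU'' (fun s hs =>
    le_trans (by have := hs.1; positivity) (hU''ineq s hs)) t ht
  have hgap : (2 * q + 3) * U 0 ≤ U t - U 0 := by
    rw [div_le_iff₀ hU'0] at hthr
    linarith
  have hW_nonneg : 0 ≤ U t - U 0 := by nlinarith
  have hUt : U t ≤ (2 * q + 4) / (2 * q + 3) * (U t - U 0) := by
    rw [div_mul_eq_mul_div, le_div_iff₀ (by linarith)]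
    linarith
  have hconst := mul_rpow_le_of_le_mul (by positivity) (by linarith) (by linarith) (by positivity)
    (by positivity) hUt (blowup_const_le (by linarith) (by linarith) hA.le hB.le)
  refine rpow_inv_mul_lt_of_lt_rpow (by positivity) (by linarith [ht.1]) (by linarith)
    (by linarith) (by linarith) ?_
  have hw : 0 ≤ (t + R) ^ (-(α + p * β)) := rpow_nonneg (by linarith [ht.1]) _
  linarith [rpow_pos_of_pos hU'0 (2 * p + 2), mul_le_mul_of_nonneg_left hconst hw]

/-- The key superlinear differential inequality for `U` in the blow-up lemma:
for `t ≥ (2q+3)U(0)/U'(0)`,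
`U'(t) > [2A/(4(q+2)²)^{p+1} · (B/(q+1))^p]^{1/(2p+2)} (t+R)^{-(α+pβ)/(2p+2)} U(t)^{(pq+2p+1)/(2p+2)}`. -/
theorem ODI_key_inequality
    (p q A B α β R T : ℝ) (U U' U'' V V' V'' : ℝ → ℝ)
    (hp : 1 < p) (hq : 1 < q) (hA : 0 < A) (hB : 0 < B)
    (hα : 0 ≤ α) (hβ : 0 ≤ β) (hR : 0 < R)
    (hU' : ∀ t ∈ Icc (0:ℝ) T, HasDerivWithinAt U (U' t) (Icc 0 T) t)
    (hU'' : ∀ t ∈ Icc (0:ℝ) T, HasDerivWithinAt U' (U'' t) (Icc 0 T) t)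
    (hUc : ContinuousOn U'' (Icc 0 T))
    (hV' : ∀ t ∈ Icc (0:ℝ) T, HasDerivWithinAt V (V' t) (Icc 0 T) t)
    (hV'' : ∀ t ∈ Icc (0:ℝ) T, HasDerivWithinAt V' (V'' t) (Icc 0 T) t)
    (hVc : ContinuousOn V'' (Icc 0 T))
    (hU''ineq : ∀ t ∈ Icc (0:ℝ) T, A * (t + R) ^ (-α) * |V t| ^ p ≤ U'' t)
    (hV''ineq : ∀ t ∈ Icc (0:ℝ) T, B * (t + R) ^ (-β) * |U t| ^ q ≤ V'' t)
    (hU0 : 0 ≤ U 0) (hU'0 : 0 < U' 0) (hV0 : 0 ≤ V 0) (hV'0 : 0 < V' 0) :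
    ∀ t ∈ Icc (0:ℝ) T, (2 * q + 3) * U 0 / U' 0 ≤ t →
      (2 * A / (4 * (q + 2) ^ 2) ^ (p + 1) * (B / (q + 1)) ^ p) ^ ((2 * p + 2)⁻¹)
        * (t + R) ^ (-((α + p * β) / (2 * p + 2)))
        * U t ^ ((p * q + 2 * p + 1) / (2 * p + 2)) < U' t :=
  ODI_key_inequality_general p q A B α β R T U U' U'' V V' V'' hp hq hA hB hα hβ hR hU' hU'' hV'
    hV'' hU''ineq hV''ineq hU0 hU'0 hV0 hV'0
end

section
/- Let p,q > 1, a > 0, δ ∈ (0,(pq−1)/(2p+2)), K, κ > 0, and T₁ > 0 with T > 2T₁. Suppose U ∈ C¹([T₁,T]) is positive and satisfies U(t) ≥ K t^a for all t ∈ [T₁,T], and U(t)^{−1−δ} U'(t) > a (K/κ)^{(pq−1)/(2p+2)} K^{−δ} (1 − 2^{−aδ})^{−1} t^{−1−aδ} for all t ∈ [T₁,T]. Then K < κ. -/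
open Real Set

/-- Final step of the blow-up lemma: if a positive `C¹` function `U` on `[T₁,T]`
(with `T > 2T₁`) satisfies `U(t) ≥ K t^a` and the differential inequality
`U(t)^{-1-δ} U'(t) > a (K/κ)^{(pq-1)/(2p+2)} K^{-δ} (1 - 2^{-aδ})^{-1} t^{-1-aδ}`,
then `K < κ`. -/
theorem ODI_final_step
    (p q a δ K κ T₁ T : ℝ) (U U' : ℝ → ℝ)
    (hp : 1 < p) (hq : 1 < q) (ha : 0 < a)
    (hδ : δ ∈ Ioo 0 ((p * q - 1) / (2 * p + 2)))
    (hK : 0 < K) (hκ : 0 < κ) (hT₁ : 0 < T₁) (hT : 2 * T₁ < T)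
    (hU' : ∀ t ∈ Icc T₁ T, HasDerivWithinAt U (U' t) (Icc T₁ T) t)
    (hU'c : ContinuousOn U' (Icc T₁ T))
    (hUpos : ∀ t ∈ Icc T₁ T, 0 < U t)
    (hUlow : ∀ t ∈ Icc T₁ T, K * t ^ a ≤ U t)
    (hUineq : ∀ t ∈ Icc T₁ T,
      a * (K / κ) ^ ((p * q - 1) / (2 * p + 2)) * K ^ (-δ)
        * (1 - 2 ^ (-(a * δ)))⁻¹ * t ^ (-1 - a * δ)
      < U t ^ (-1 - δ) * U' t) :
    K < κ := by
  obtain ⟨hδ0, hδe⟩ := hδ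
  set e : ℝ := (p * q - 1) / (2 * p + 2) with he
  have he0 : 0 < e := lt_trans hδ0 hδe
  set M : ℝ := (K / κ) ^ e with hM
  have hMpos : 0 < M := Real.rpow_pos_of_pos (div_pos hK hκ) e
  set r : ℝ := (2 : ℝ) ^ (-(a * δ)) with hr
  have hr1 : r < 1 := Real.rpow_lt_one_of_one_lt_of_neg one_lt_two
    (by nlinarith : -(a * δ) < 0)
  have hrpos : 0 < r := Real.rpow_pos_of_pos two_pos _
  set c : ℝ := (1 - r)⁻¹ with hc
  have hcpos : 0 < c := inv_pos.2 (by linarith)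
  set D : ℝ := M * K ^ (-δ) * c with hD
  have hKd : (0:ℝ) < K ^ (-δ) := Real.rpow_pos_of_pos hK _
  have hDpos : 0 < D := by positivity
  -- the interval [T₁, 2T₁]
  have h2T₁ : T₁ < 2 * T₁ := by linarith
  have hsub : Icc T₁ (2 * T₁) ⊆ Icc T₁ T := Icc_subset_Icc le_rfl (le_of_lt hT)
  -- the auxiliary function
  set H : ℝ → ℝ := fun t => -(1 / δ) * U t ^ (-δ) + D / δ * t ^ (-(a * δ)) with hH
  have hUc : ContinuousOn U (Icc T₁ T) := fun t ht =>
    (hU' t ht).continuousWithinAt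
  have htpos : ∀ t ∈ Icc T₁ (2 * T₁), 0 < t := fun t ht => lt_of_lt_of_le hT₁ ht.1
  have hHc : ContinuousOn H (Icc T₁ (2 * T₁)) := by
    apply ContinuousOn.add
    · exact (continuousOn_const.mul (((hUc.mono hsub).rpow_const
        (fun t ht => Or.inl (ne_of_gt (hUpos t (hsub ht)))))))
    · exact continuousOn_const.mul (ContinuousOn.rpow_const continuousOn_id
        (fun t ht => Or.inl (ne_of_gt (htpos t ht))))
  have hmono : StrictMonoOn H (Icc T₁ (2 * T₁)) := by
    apply strictMonoOn_of_deriv_pos (convex_Icc _ _) hHc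
    intro x hx
    rw [interior_Icc] at hx
    have hxIcc : x ∈ Icc T₁ T := hsub (Ioo_subset_Icc_self hx)
    have hx0 : 0 < x := lt_trans hT₁ hx.1
    have hUx : 0 < U x := hUpos x hxIcc
    have hnhds : Icc T₁ T ∈ nhds x :=
      Icc_mem_nhds (lt_of_lt_of_le hx.1 (le_refl x) |>.trans_le le_rfl)
        (lt_of_lt_of_le hx.2 (le_of_lt hT))
    have hUd : HasDerivAt U (U' x) x := (hU' x hxIcc).hasDerivAt hnhds
    have h1 : HasDerivAt (fun t => U t ^ (-δ)) (U' x * (-δ) * U x ^ (-δ - 1)) x :=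
      hUd.rpow_const (Or.inl (ne_of_gt hUx))
    have h2 : HasDerivAt (fun t : ℝ => t ^ (-(a * δ)))
        (-(a * δ) * x ^ (-(a * δ) - 1)) x :=
      Real.hasDerivAt_rpow_const (Or.inl (ne_of_gt hx0))
    have h3 : HasDerivAt H
        (-(1 / δ) * (U' x * (-δ) * U x ^ (-δ - 1))
          + D / δ * (-(a * δ) * x ^ (-(a * δ) - 1))) x :=
      (h1.const_mul _).add (h2.const_mul _)
    rw [h3.deriv]
    have hineq := hUineq x hxIcc
    have hδne : δ ≠ 0 := ne_of_gt hδ0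
    have hrw1 : (-δ - 1 : ℝ) = -1 - δ := by ring
    have hrw2 : (-(a * δ) - 1 : ℝ) = -1 - a * δ := by ring
    rw [hrw1, hrw2]
    have heq : -(1 / δ) * (U' x * (-δ) * U x ^ (-1 - δ))
        + D / δ * (-(a * δ) * x ^ (-1 - a * δ))
        = U x ^ (-1 - δ) * U' x - a * D * x ^ (-1 - a * δ) := by
      field_simp
      ring
    rw [heq]
    have : a * M * K ^ (-δ) * c * x ^ (-1 - a * δ) = a * D * x ^ (-1 - a * δ) := by
      rw [hD]; ring
    linarith [hineq, this ▸ hineq]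
  -- evaluate H at T₁ and 2T₁
  have hT₁mem : T₁ ∈ Icc T₁ (2 * T₁) := ⟨le_rfl, le_of_lt h2T₁⟩
  have h2T₁mem : (2 * T₁) ∈ Icc T₁ (2 * T₁) := ⟨le_of_lt h2T₁, le_rfl⟩
  have hHlt : H T₁ < H (2 * T₁) := hmono hT₁mem h2T₁mem h2T₁
  -- rewrite (2T₁)^(-(aδ)) = r * T₁^(-(aδ))
  have h2Trw : (2 * T₁) ^ (-(a * δ)) = r * T₁ ^ (-(a * δ)) := by
    rw [Real.mul_rpow (by norm_num) (le_of_lt hT₁)]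
  have hu1 : 0 < U T₁ ^ (-δ) := Real.rpow_pos_of_pos (hUpos T₁ (hsub hT₁mem)) _
  have hu2 : 0 < U (2 * T₁) ^ (-δ) :=
    Real.rpow_pos_of_pos (hUpos (2 * T₁) (hsub h2T₁mem)) _
  have hs : 0 < T₁ ^ (-(a * δ)) := Real.rpow_pos_of_pos hT₁ _
  -- key inequality: M * K^(-δ) * s < U T₁ ^ (-δ)
  have hkey : M * K ^ (-δ) * T₁ ^ (-(a * δ)) < U T₁ ^ (-δ) := by
    have hδne : δ ≠ 0 := ne_of_gt hδ0
    have hc1 : c * (1 - r) = 1 := inv_mul_cancel₀ (by linarith)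
    rw [hH] at hHlt
    simp only [h2Trw] at hHlt
    have h5' := mul_lt_mul_of_pos_left hHlt hδ0
    have e1 : δ * (-(1 / δ) * U T₁ ^ (-δ) + D / δ * T₁ ^ (-(a * δ)))
        = -U T₁ ^ (-δ) + D * T₁ ^ (-(a * δ)) := by field_simp
    have e2 : δ * (-(1 / δ) * U (2 * T₁) ^ (-δ) + D / δ * (r * T₁ ^ (-(a * δ))))
        = -U (2 * T₁) ^ (-δ) + D * (r * T₁ ^ (-(a * δ))) := by field_simp
    rw [e1, e2] at h5'
    have h5 : D * (T₁ ^ (-(a * δ)) - r * T₁ ^ (-(a * δ)))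
        < U T₁ ^ (-δ) - U (2 * T₁) ^ (-δ) := by nlinarith [h5', hu2]
    have h6 : D * (T₁ ^ (-(a * δ)) - r * T₁ ^ (-(a * δ)))
        = M * K ^ (-δ) * T₁ ^ (-(a * δ)) := by
      rw [hD]
      have : T₁ ^ (-(a * δ)) - r * T₁ ^ (-(a * δ)) = (1 - r) * T₁ ^ (-(a * δ)) := by ring
      rw [this]
      have : M * K ^ (-δ) * c * ((1 - r) * T₁ ^ (-(a * δ)))
          = M * K ^ (-δ) * (c * (1 - r)) * T₁ ^ (-(a * δ)) := by ring
      rw [this, hc1, mul_one]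
    linarith [h6 ▸ h5]
  -- upper bound: U T₁ ^ (-δ) ≤ K^(-δ) * T₁^(-(aδ))
  have hup : U T₁ ^ (-δ) ≤ K ^ (-δ) * T₁ ^ (-(a * δ)) := by
    have hlow := hUlow T₁ (hsub hT₁mem)
    have hKT : 0 < K * T₁ ^ a := by positivity
    have h1 : U T₁ ^ (-δ) ≤ (K * T₁ ^ a) ^ (-δ) :=
      Real.rpow_le_rpow_of_nonpos hKT hlow (by linarith)
    have h2 : (K * T₁ ^ a) ^ (-δ) = K ^ (-δ) * T₁ ^ (-(a * δ)) := by
      rw [Real.mul_rpow (le_of_lt hK) (by positivity)]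
      congr 1
      rw [← Real.rpow_mul (le_of_lt hT₁)]
      ring_nf
    rw [h2] at h1
    exact h1
  -- conclude M < 1
  have hM1 : M < 1 := by
    have h7 : M * (K ^ (-δ) * T₁ ^ (-(a * δ))) < 1 * (K ^ (-δ) * T₁ ^ (-(a * δ))) := by
      calc M * (K ^ (-δ) * T₁ ^ (-(a * δ)))
          = M * K ^ (-δ) * T₁ ^ (-(a * δ)) := by ring
        _ < U T₁ ^ (-δ) := hkey
        _ ≤ K ^ (-δ) * T₁ ^ (-(a * δ)) := hup
        _ = 1 * (K ^ (-δ) * T₁ ^ (-(a * δ))) := by ring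
    exact lt_of_mul_lt_mul_right h7 (by positivity)
  -- conclude K < κ
  by_contra hcon
  push_neg at hcon
  have h8 : (1 : ℝ) ≤ K / κ := (one_le_div hκ).2 hcon
  have h9 : (1 : ℝ) ≤ M := Real.one_le_rpow h8 (le_of_lt he0)
  linarith
end

section
/- Let n ≥ 2, p,q > 1 with n−1−(n−1)p/2 ≥ 0, let C, ε, R > 0, and let U'', V'' be continuous nonnegative functions such that U''(s) ≥ C ε^p (s+R)^{n−1−(n−1)p/2} for all s ≥ 0 and V''(t) ≥ C (t+R)^{−(n−1)q/2} ∫₀^{t−R} ρ^{n−1} (t−ρ+R)^{−(n−1)q/2} ( ∫₀^{(t−ρ−R)/2} U''(s) ds )^q dρ for all t ≥ R. Then V''(t) ≥ C' (t−R)^{nq+n} (t+R)^{−(n−1)q(p+2)/2} for all t ≥ R, where C' = C^{q+1} ε^{pq} 2^{−2nq−n} n^{−q−1}. -/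
open Real Set

/-- Result of inserting the first-step lower bound for `U''` into the integral
frame inequality for `V''`:
`V''(t) ≥ C' (t-R)^{nq+n} (t+R)^{-(n-1)q(p+2)/2}` for `t ≥ R`, where
`C' = C^{q+1} ε^{pq} 2^{-2nq-n} n^{-q-1}`. -/
theorem second_iteration_step_V
    (n : ℕ) (p q C ε R : ℝ) (U'' V'' : ℝ → ℝ)
    (hn : 2 ≤ n) (hp : 1 < p) (hq : 1 < q)
    (hexp : 0 ≤ (n : ℝ) - 1 - ((n : ℝ) - 1) * p / 2)
    (hC : 0 < C) (hε : 0 < ε) (hR : 0 < R)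
    (hUcont : Continuous U'') (hVcont : Continuous V'')
    (hUnonneg : ∀ s : ℝ, 0 ≤ U'' s) (hVnonneg : ∀ s : ℝ, 0 ≤ V'' s)
    (hU : ∀ s : ℝ, 0 ≤ s →
      C * ε ^ p * (s + R) ^ ((n : ℝ) - 1 - ((n : ℝ) - 1) * p / 2) ≤ U'' s)
    (hV : ∀ t : ℝ, R ≤ t →
      C * (t + R) ^ (-(((n : ℝ) - 1) * q / 2)) * ∫ ρ in (0:ℝ)..(t - R),
          ρ ^ ((n : ℝ) - 1) * (t - ρ + R) ^ (-(((n : ℝ) - 1) * q / 2))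
          * (∫ s in (0:ℝ)..((t - ρ - R) / 2), U'' s) ^ q
        ≤ V'' t) :
    ∀ t : ℝ, R ≤ t →
      C ^ (q + 1) * ε ^ (p * q) * 2 ^ (-(2 * (n : ℝ) * q) - (n : ℝ))
        * (n : ℝ) ^ (-q - 1)
        * (t - R) ^ ((n : ℝ) * q + (n : ℝ))
        * (t + R) ^ (-(((n : ℝ) - 1) * q * (p + 2) / 2)) ≤ V'' t := by
  intro t ht
  have hVt := hV t ht
  have hn2 : (2:ℝ) ≤ (n:ℝ) := by exact_mod_cast hn
  have hnpos : (0:ℝ) < (n:ℝ) := by linarith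
  have hq0 : (0:ℝ) ≤ q := by linarith
  set a : ℝ := ((n:ℝ) - 1) * q / 2 with ha_def
  set c : ℝ := ((n:ℝ) - 1) * p / 2 with hc_def
  have ha0 : 0 ≤ a := by
    rw [ha_def]
    exact div_nonneg (mul_nonneg (by linarith) hq0) (by norm_num)
  have hc0 : 0 ≤ c := by
    rw [hc_def]
    exact div_nonneg (mul_nonneg (by linarith) (by linarith)) (by norm_num)
  have hY : (0:ℝ) < t + R := by linarith
  have hX0 : (0:ℝ) ≤ t - R := by linarith
  have hcast : ((n - 1 : ℕ) : ℝ) = (n:ℝ) - 1 := by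
    push_cast [Nat.cast_sub (by omega : 1 ≤ n)]
    ring
  have hmonoeq : ∀ x : ℝ, x ^ ((n:ℝ) - 1) = x ^ (n - 1 : ℕ) := fun x => by
    rw [← hcast, Real.rpow_natCast]
  -- the primitive of U'' is continuous
  have hF : Continuous fun x : ℝ => ∫ s in (0:ℝ)..x, U'' s :=
    intervalIntegral.continuous_primitive (fun a b => hUcont.intervalIntegrable a b) 0
  have hInner0 : ∀ x : ℝ, 0 ≤ x → 0 ≤ ∫ s in (0:ℝ)..x, U'' s := fun x hx =>
    intervalIntegral.integral_nonneg hx (fun u _ => hUnonneg u)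
  -- auxiliary: the integral of a monomial
  have hmonoint : ∀ r M : ℝ, ∫ s in (0:ℝ)..M, r * s ^ (n - 1 : ℕ)
      = r * (M ^ ((n:ℝ)) / n) := by
    intro r M
    rw [intervalIntegral.integral_const_mul, integral_pow,
      show n - 1 + 1 = n from by omega, zero_pow (by omega : n ≠ 0),
      ← Real.rpow_natCast M n, hcast]
    ring
  set K0 : ℝ := C * ε ^ p * (t + R) ^ (-c) / n with hK0_def
  have hK0pos : 0 < K0 := by
    rw [hK0_def]
    have := Real.rpow_pos_of_pos hY (-c)
    positivity
  -- Step A: inner integral lower bound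
  have hA : ∀ ρ : ℝ, 0 ≤ ρ → ρ ≤ t - R →
      K0 * ((t - ρ - R) / 2) ^ ((n:ℝ)) ≤ ∫ s in (0:ℝ)..((t - ρ - R) / 2), U'' s := by
    intro ρ hρ0 hρ1
    have hM0 : (0:ℝ) ≤ (t - ρ - R) / 2 := by linarith
    have key : ∀ s ∈ Icc (0:ℝ) ((t - ρ - R) / 2),
        C * ε ^ p * (t + R) ^ (-c) * s ^ (n - 1 : ℕ) ≤ U'' s := by
      intro s hs
      have hs0 := hs.1
      have hsM := hs.2
      have hsR : (0:ℝ) < s + R := by linarith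
      have hsY : s + R ≤ t + R := by linarith
      have h1 : (t + R) ^ (-c) ≤ (s + R) ^ (-c) :=
        Real.rpow_le_rpow_of_nonpos hsR hsY (by linarith)
      have h2 : (s:ℝ) ^ (n - 1 : ℕ) ≤ (s + R) ^ ((n:ℝ) - 1) := by
        rw [hmonoeq (s + R)]
        exact pow_le_pow_left₀ hs0 (by linarith) _
      have h3 : (t + R) ^ (-c) * s ^ (n - 1 : ℕ) ≤ (s + R) ^ (-c) * (s + R) ^ ((n:ℝ) - 1) :=
        mul_le_mul h1 h2 (pow_nonneg hs0 _) (Real.rpow_nonneg hsR.le _)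
      calc C * ε ^ p * (t + R) ^ (-c) * s ^ (n - 1 : ℕ)
          = (C * ε ^ p) * ((t + R) ^ (-c) * s ^ (n - 1 : ℕ)) := by ring
        _ ≤ (C * ε ^ p) * ((s + R) ^ (-c) * (s + R) ^ ((n:ℝ) - 1)) := by
            apply mul_le_mul_of_nonneg_left h3
            positivity
        _ = C * ε ^ p * (s + R) ^ ((n:ℝ) - 1 - c) := by
            rw [← Real.rpow_add hsR]
            congr 2
            ring
        _ ≤ U'' s := hU s hs0
    have hint : ∫ s in (0:ℝ)..((t - ρ - R) / 2), C * ε ^ p * (t + R) ^ (-c) * s ^ (n - 1 : ℕ)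
        ≤ ∫ s in (0:ℝ)..((t - ρ - R) / 2), U'' s :=
      intervalIntegral.integral_mono_on hM0
        (((continuous_const.mul (continuous_pow _)).intervalIntegrable _ _))
        (hUcont.intervalIntegrable _ _) key
    rw [hmonoint] at hint
    refine le_trans (le_of_eq ?_) hint
    rw [hK0_def]
    ring
  set K1 : ℝ := (t + R) ^ (-a) * (K0 * ((t - R) / 4) ^ ((n:ℝ))) ^ q with hK1_def
  -- nonnegativity and integrability of the integrand
  have hfnn : ∀ x ∈ Ioc (0:ℝ) (t - R),
      0 ≤ x ^ ((n:ℝ) - 1) * (t - x + R) ^ (-a)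
        * (∫ s in (0:ℝ)..((t - x - R) / 2), U'' s) ^ q := by
    intro x hx
    exact mul_nonneg (mul_nonneg (Real.rpow_nonneg hx.1.le _)
      (Real.rpow_nonneg (by linarith [hx.2] : (0:ℝ) ≤ t - x + R) _))
      (Real.rpow_nonneg (hInner0 _ (by linarith [hx.2])) _)
  have hfc : ContinuousOn (fun x : ℝ => x ^ ((n:ℝ) - 1) * (t - x + R) ^ (-a)
      * (∫ s in (0:ℝ)..((t - x - R) / 2), U'' s) ^ q) (Icc 0 (t - R)) := by
    apply ContinuousOn.mul
    · apply ContinuousOn.mul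
      · have : (fun x : ℝ => x ^ ((n:ℝ) - 1)) = fun x : ℝ => x ^ (n - 1 : ℕ) :=
          funext hmonoeq
        rw [this]
        exact (continuous_pow _).continuousOn
      · apply ContinuousOn.rpow_const
        · fun_prop
        · intro x hx
          left
          have := hx.2
          simp only [mem_Icc] at hx
          have : (0:ℝ) < t - x + R := by linarith [hx.2]
          linarith
    · apply ContinuousOn.rpow_const
      · exact (hF.comp (by fun_prop)).continuousOn
      · intro x _
        right
        exact hq0
  have hfi : IntervalIntegrable (fun x : ℝ => x ^ ((n:ℝ) - 1) * (t - x + R) ^ (-a)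
      * (∫ s in (0:ℝ)..((t - x - R) / 2), U'' s) ^ q) MeasureTheory.volume 0 (t - R) := by
    apply ContinuousOn.intervalIntegrable
    rwa [uIcc_of_le hX0]
  -- Step B: pointwise bound on [0, (t-R)/2]
  have hB : ∀ ρ ∈ Icc (0:ℝ) ((t - R) / 2),
      K1 * ρ ^ (n - 1 : ℕ) ≤ ρ ^ ((n:ℝ) - 1) * (t - ρ + R) ^ (-a)
        * (∫ s in (0:ℝ)..((t - ρ - R) / 2), U'' s) ^ q := by
    intro ρ hρ
    obtain ⟨hρ0, hρ2⟩ := hρ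
    have hq4 : (0:ℝ) ≤ (t - R) / 4 := by linarith
    have e1 : ((t - R) / 4) ^ ((n:ℝ)) ≤ ((t - ρ - R) / 2) ^ ((n:ℝ)) :=
      Real.rpow_le_rpow hq4 (by linarith) (by linarith)
    have e2 : K0 * ((t - R) / 4) ^ ((n:ℝ)) ≤ ∫ s in (0:ℝ)..((t - ρ - R) / 2), U'' s :=
      le_trans (mul_le_mul_of_nonneg_left e1 hK0pos.le) (hA ρ hρ0 (by linarith))
    have e3 : (K0 * ((t - R) / 4) ^ ((n:ℝ))) ^ q
        ≤ (∫ s in (0:ℝ)..((t - ρ - R) / 2), U'' s) ^ q :=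
      Real.rpow_le_rpow (by positivity) e2 hq0
    have e4 : (t + R) ^ (-a) ≤ (t - ρ + R) ^ (-a) :=
      Real.rpow_le_rpow_of_nonpos (by linarith) (by linarith) (by linarith)
    have e5 : (t + R) ^ (-a) * (K0 * ((t - R) / 4) ^ ((n:ℝ))) ^ q
        ≤ (t - ρ + R) ^ (-a) * (∫ s in (0:ℝ)..((t - ρ - R) / 2), U'' s) ^ q :=
      mul_le_mul e4 e3 (Real.rpow_nonneg (by positivity) _)
        (Real.rpow_nonneg (by linarith) _)
    calc K1 * ρ ^ (n - 1 : ℕ)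
        = ρ ^ (n - 1 : ℕ) * ((t + R) ^ (-a) * (K0 * ((t - R) / 4) ^ ((n:ℝ))) ^ q) := by
          rw [hK1_def]; ring
      _ ≤ ρ ^ (n - 1 : ℕ) * ((t - ρ + R) ^ (-a)
            * (∫ s in (0:ℝ)..((t - ρ - R) / 2), U'' s) ^ q) :=
          mul_le_mul_of_nonneg_left e5 (pow_nonneg hρ0 _)
      _ = ρ ^ ((n:ℝ) - 1) * (t - ρ + R) ^ (-a)
            * (∫ s in (0:ℝ)..((t - ρ - R) / 2), U'' s) ^ q := by
          rw [hmonoeq ρ]; ring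
  -- main chain
  have main : C * (t + R) ^ (-a) * (K1 * (((t - R) / 2) ^ ((n:ℝ)) / n)) ≤ V'' t := by
    have hsub : uIcc (0:ℝ) ((t - R) / 2) ⊆ uIcc (0:ℝ) (t - R) := by
      rw [uIcc_of_le hX0, uIcc_of_le (by linarith : (0:ℝ) ≤ (t - R) / 2)]
      exact Icc_subset_Icc le_rfl (by linarith)
    have s3 : ∫ ρ in (0:ℝ)..((t - R) / 2), K1 * ρ ^ (n - 1 : ℕ)
        ≤ ∫ ρ in (0:ℝ)..((t - R) / 2), (ρ ^ ((n:ℝ) - 1) * (t - ρ + R) ^ (-a)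
          * (∫ s in (0:ℝ)..((t - ρ - R) / 2), U'' s) ^ q) :=
      intervalIntegral.integral_mono_on (by linarith)
        ((continuous_const.mul (continuous_pow _)).intervalIntegrable _ _)
        (hfi.mono_set hsub) hB
    have s2 : ∫ ρ in (0:ℝ)..((t - R) / 2), (ρ ^ ((n:ℝ) - 1) * (t - ρ + R) ^ (-a)
          * (∫ s in (0:ℝ)..((t - ρ - R) / 2), U'' s) ^ q)
        ≤ ∫ ρ in (0:ℝ)..(t - R), (ρ ^ ((n:ℝ) - 1) * (t - ρ + R) ^ (-a)
          * (∫ s in (0:ℝ)..((t - ρ - R) / 2), U'' s) ^ q) :=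
      intervalIntegral.integral_mono_interval le_rfl (by linarith) (by linarith)
        ((MeasureTheory.ae_restrict_iff' measurableSet_Ioc).mpr
          (MeasureTheory.ae_of_all _ hfnn)) hfi
    rw [hmonoint] at s3
    have hCY : (0:ℝ) ≤ C * (t + R) ^ (-a) := by
      have := Real.rpow_nonneg hY.le (-a)
      positivity
    calc C * (t + R) ^ (-a) * (K1 * (((t - R) / 2) ^ ((n:ℝ)) / n))
        ≤ C * (t + R) ^ (-a) * ∫ ρ in (0:ℝ)..(t - R), (ρ ^ ((n:ℝ) - 1) * (t - ρ + R) ^ (-a)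
            * (∫ s in (0:ℝ)..((t - ρ - R) / 2), U'' s) ^ q) :=
          mul_le_mul_of_nonneg_left (le_trans s3 s2) hCY
      _ ≤ V'' t := hVt
  -- final algebraic identity
  refine le_trans (le_of_eq ?_) main
  have h22 : ((2:ℝ) ^ (2:ℝ)) = 4 := by
    have := Real.rpow_natCast (2:ℝ) 2
    norm_num at this
    linarith [this]
  have h4 : ((4:ℝ)) ^ ((n:ℝ) * q) = (2:ℝ) ^ (2 * ((n:ℝ) * q)) := by
    rw [Real.rpow_mul (by norm_num : (0:ℝ) ≤ 2), h22]
  rw [hK1_def, hK0_def]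
  rw [Real.div_rpow hX0 (by norm_num : (0:ℝ) ≤ 4),
      Real.div_rpow hX0 (by norm_num : (0:ℝ) ≤ 2)]
  rw [show C * ε ^ p * (t + R) ^ (-c) / ↑n * ((t - R) ^ ((n:ℝ)) / (4:ℝ) ^ ((n:ℝ)))
      = C * ε ^ p * (t + R) ^ (-c) * (t - R) ^ ((n:ℝ)) / (↑n * (4:ℝ) ^ ((n:ℝ))) from by ring]
  rw [Real.div_rpow (by positivity) (by positivity)]
  rw [Real.mul_rpow (by positivity) (Real.rpow_nonneg hX0 _)]
  rw [Real.mul_rpow (by positivity) (Real.rpow_nonneg hY.le _)]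
  rw [Real.mul_rpow hC.le (Real.rpow_nonneg hε.le _)]
  rw [Real.mul_rpow hnpos.le (Real.rpow_nonneg (by norm_num : (0:ℝ) ≤ 4) _)]
  rw [← Real.rpow_mul hε.le, ← Real.rpow_mul hY.le, ← Real.rpow_mul hX0,
      ← Real.rpow_mul (by norm_num : (0:ℝ) ≤ 4)]
  rw [h4]
  -- now expand the left-hand side (the goal's LHS)
  rw [Real.rpow_add hC q 1, Real.rpow_one]
  rw [Real.rpow_add' hX0 (by nlinarith : (n:ℝ) * q + (n:ℝ) ≠ 0)]
  rw [show -(((n:ℝ) - 1) * q * (p + 2) / 2) = -a + (-a + (-c) * q) from by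
    rw [ha_def, hc_def]; ring]
  rw [Real.rpow_add hY, Real.rpow_add hY]
  rw [show -(2 * (n:ℝ) * q) - (n:ℝ) = -(2 * ((n:ℝ) * q)) + -(n:ℝ) from by ring]
  rw [Real.rpow_add (by norm_num : (0:ℝ) < 2),
      Real.rpow_neg (by norm_num : (0:ℝ) ≤ 2) (2 * ((n:ℝ) * q)),
      Real.rpow_neg (by norm_num : (0:ℝ) ≤ 2) ((n:ℝ))]
  rw [show -q - 1 = -(q + 1) from by ring, Real.rpow_neg hnpos.le,
      Real.rpow_add hnpos q 1, Real.rpow_one]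
  have hX2 : ((t - R):ℝ) ^ ((n:ℝ)) = (t - R) ^ ((n:ℝ)) := rfl
  field_simp
end

section
/- Let n ≥ 2, 1 < p ≤ 2 ≤ q, R ≥ 1, j ≥ 1, a_j = 6·4^{j−1} − 2, and C_j > 0. Suppose U ∈ C²([0,∞)) satisfies U(t) ≥ 0 and U'(t) ≥ 0 for all t ≥ 0, and U''(t) ≥ C_j (t−a_jR)^{n−1−(n−1)p/2} ( log( (t+(a_j²−2)R)/((a_j+2)(a_j−1)R) ) )^{((pq)^j−1)/(pq−1)} for all t ≥ a_jR. Then U(t) ≥ (C_j A / 16^j) ( log √t )^{((pq)^j−1)/(pq−1)} t^{n+1−(n−1)p/2} for all t ≥ (a_j+2)⁴R², where A = 2^{−3n−4+3(n−1)p/2}. -/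
open Real Set

/-- Helper: if `f` has derivative `f'` within `Ici 0` and `C ≤ f'` on `[a,b]` with `0 < a`,
then `C * (b - a) ≤ f b - f a`. -/
lemma key_mvt (f f' : ℝ → ℝ)
    (hf : ∀ x ∈ Ici (0:ℝ), HasDerivWithinAt f (f' x) (Ici 0) x)
    {a b C : ℝ} (ha : 0 < a) (hab : a ≤ b)
    (hC : ∀ x ∈ Icc a b, C ≤ f' x) :
    C * (b - a) ≤ f b - f a := by
  have hsub : Icc a b ⊆ Ici (0:ℝ) := fun x hx => le_trans ha.le hx.1
  have hDA : ∀ x ∈ interior (Icc a b), HasDerivAt f (f' x) x := by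
    intro x hx
    rw [interior_Icc] at hx
    have hx0 : 0 < x := lt_of_lt_of_le ha hx.1.le
    exact (hf x hx0.le).hasDerivAt (Ici_mem_nhds hx0)
  have hcont0 : ContinuousOn f (Ici (0:ℝ)) := fun x hx => (hf x hx).continuousWithinAt
  have hcont : ContinuousOn f (Icc a b) := hcont0.mono hsub
  have hdiff : DifferentiableOn ℝ f (interior (Icc a b)) :=
    fun x hx => ((hDA x hx).differentiableAt).differentiableWithinAt
  have hge : ∀ x ∈ interior (Icc a b), C ≤ deriv f x := by
    intro x hx
    rw [(hDA x hx).deriv]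
    exact hC x (interior_subset hx)
  exact (convex_Icc a b).mul_sub_le_image_sub_of_le_deriv hcont hdiff hge
    a (left_mem_Icc.2 hab) b (right_mem_Icc.2 hab) hab


section helpers

private lemma arith_c4 {c : ℝ} (hc6 : 6 ≤ c) : 1296 ≤ c ^ 4 := by
  have h36 : 36 ≤ c ^ 2 := by nlinarith
  nlinarith

private lemma arith_t_ge_one {c R t : ℝ} (hc6 : 6 ≤ c) (hR : 1 ≤ R)
    (htc : c ^ 4 * R ^ 2 ≤ t) : 1 ≤ t := by
  have h2 := arith_c4 hc6
  have h3 : 1 ≤ R ^ 2 := by nlinarith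
  nlinarith [mul_le_mul h2 h3 (by norm_num) (by linarith : (0:ℝ) ≤ c ^ 4)]

private lemma arith_sqrt_sq {c R t : ℝ} (htc : c ^ 4 * R ^ 2 ≤ t) :
    (c ^ 2 * R) ^ 2 ≤ t := by nlinarith

private lemma arith_beta {x p : ℝ} (hx : 1 ≤ x) (hp2 : p ≤ 2) :
    0 ≤ x - 1 - (x - 1) * p / 2 := by nlinarith

private lemma arith_pq {p q : ℝ} (hp : 1 < p) (h2q : 2 ≤ q) : 1 < p * q := by nlinarith

private lemma arith_3tc {c t : ℝ} (hc6 : 6 ≤ c) (ht0 : 0 < t) : 3 * t / c ≤ t / 2 := by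
  rw [div_le_div_iff₀ (by linarith) (by norm_num)]
  nlinarith

private lemma arith_ajR {c R t : ℝ} (hc6 : 6 ≤ c) (hR : 1 ≤ R)
    (htc : c ^ 4 * R ^ 2 ≤ t) : 4 * (c - 2) * R ≤ t := by
  have hc0 : (0:ℝ) ≤ c := by linarith
  have hR0 : (0:ℝ) ≤ R := by linarith
  have h36 : 36 ≤ c ^ 2 := by nlinarith
  have h216 : 216 ≤ c ^ 3 := by nlinarith [mul_le_mul_of_nonneg_left h36 hc0]
  have h4c : 4 * c ≤ c ^ 4 := by nlinarith [mul_le_mul_of_nonneg_left h216 hc0]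
  have e1 : 4 * (c - 2) * R ≤ 4 * c * R := by nlinarith
  have e2 : 4 * c * R ≤ c ^ 4 * R := mul_le_mul_of_nonneg_right h4c hR0
  have hRR : R ≤ R ^ 2 := by nlinarith
  have e3 : c ^ 4 * R ≤ c ^ 4 * R ^ 2 :=
    mul_le_mul_of_nonneg_left hRR (by positivity)
  linarith

private lemma arith_key {s c R t : ℝ} (hq : s * (c ^ 2 * R) ≤ t) (hc6 : 6 ≤ c)
    (hs : 0 ≤ s) (hR0 : 0 < R) : s * (c * (c - 2 - 1) * R) * c ≤ t * (c - 3) := by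
  nlinarith [mul_le_mul_of_nonneg_left hq (show (0:ℝ) ≤ c - 3 by linarith)]

private lemma arith_sq4 {a R : ℝ} (h : 4 ≤ a) (hR0 : 0 < R) : 0 ≤ (a ^ 2 - 2) * R :=
  mul_nonneg (by nlinarith) hR0.le

end helpers

set_option maxHeartbeats 1000000 in
/-- Integrating the iteration bound for `U''` twice: for `t ≥ (a_j+2)⁴R²`,
`U(t) ≥ (C_j A / 16^j) (log √t)^{((pq)^j-1)/(pq-1)} t^{n+1-(n-1)p/2}`, where
`A = 2^{-3n-4+3(n-1)p/2}`. -/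
theorem double_integration_lower_bound
    (n : ℕ) (p q R : ℝ) (j : ℕ) (aj Cj : ℝ) (U U' U'' : ℝ → ℝ)
    (hn : 2 ≤ n) (hp : 1 < p) (hp2 : p ≤ 2) (h2q : 2 ≤ q) (hR : 1 ≤ R)
    (hj : 1 ≤ j) (haj : aj = 6 * (4:ℝ) ^ (j - 1) - 2) (hCj : 0 < Cj)
    (hU' : ∀ t ∈ Ici (0:ℝ), HasDerivWithinAt U (U' t) (Ici 0) t)
    (hU'' : ∀ t ∈ Ici (0:ℝ), HasDerivWithinAt U' (U'' t) (Ici 0) t)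
    (hUc : ContinuousOn U'' (Ici 0))
    (hUnonneg : ∀ t : ℝ, 0 ≤ t → 0 ≤ U t)
    (hU'nonneg : ∀ t : ℝ, 0 ≤ t → 0 ≤ U' t)
    (hUj : ∀ t : ℝ, aj * R ≤ t →
      Cj * (t - aj * R) ^ ((n : ℝ) - 1 - ((n : ℝ) - 1) * p / 2)
        * (Real.log ((t + (aj ^ 2 - 2) * R) / ((aj + 2) * (aj - 1) * R)))
            ^ (((p * q) ^ j - 1) / (p * q - 1))
        ≤ U'' t) :
    ∀ t : ℝ, (aj + 2) ^ 4 * R ^ 2 ≤ t →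
      Cj * (2:ℝ) ^ (-3 * (n : ℝ) - 4 + 3 * ((n : ℝ) - 1) * p / 2) / 16 ^ j
        * (Real.log (Real.sqrt t)) ^ (((p * q) ^ j - 1) / (p * q - 1))
        * t ^ ((n : ℝ) + 1 - ((n : ℝ) - 1) * p / 2)
        ≤ U t := by
  intro t ht
  obtain ⟨k, rfl⟩ : ∃ k, j = k + 1 := ⟨j - 1, (Nat.succ_pred_eq_of_pos hj).symm⟩
  set β : ℝ := (n : ℝ) - 1 - ((n : ℝ) - 1) * p / 2 with hβdef
  set γ : ℝ := ((p * q) ^ (k + 1) - 1) / (p * q - 1) with hγdef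
  clear_value β γ
  have hR0 : (0:ℝ) < R := lt_of_lt_of_le one_pos hR
  set c : ℝ := aj + 2 with hcdef
  clear_value c
  have h4k : (1:ℝ) ≤ (4:ℝ) ^ k := one_le_pow₀ (by norm_num)
  have hc : c = 6 * (4:ℝ) ^ k := by simp [hcdef, haj]
  have hc6 : (6:ℝ) ≤ c := by rw [hc]; linarith
  have hc0 : (0:ℝ) < c := by linarith
  have hajc : aj = c - 2 := by rw [hcdef]; ring
  have haj4 : (4:ℝ) ≤ aj := by rw [hajc]; linarith
  -- powers of c
  -- basic bound on t
  have htc : c ^ 4 * R ^ 2 ≤ t := ht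
  have ht1 : (1:ℝ) ≤ t := arith_t_ge_one hc6 hR htc
  have ht0 : (0:ℝ) < t := by linarith
  -- sqrt facts
  have hst : Real.sqrt t * Real.sqrt t = t := Real.mul_self_sqrt ht0.le
  have hst0 : 0 < Real.sqrt t := Real.sqrt_pos.2 ht0
  have hst1 : (1:ℝ) ≤ Real.sqrt t := by
    have h := Real.sqrt_le_sqrt ht1
    rwa [Real.sqrt_one] at h
  have hstc : c ^ 2 * R ≤ Real.sqrt t := by
    rw [Real.le_sqrt (by positivity) ht0.le]
    exact arith_sqrt_sq htc
  have hlog0 : 0 ≤ Real.log (Real.sqrt t) := Real.log_nonneg hst1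
  -- exponents nonneg
  have hn1 : (1:ℝ) ≤ (n:ℝ) := by exact_mod_cast Nat.one_le_of_lt hn
  have hβ0 : 0 ≤ β := by rw [hβdef]; exact arith_beta hn1 hp2
  have hpq1 : (1:ℝ) < p * q := arith_pq hp h2q
  have hγ0 : 0 ≤ γ := by
    rw [hγdef]
    apply div_nonneg _ (by linarith)
    have : (1:ℝ) ≤ (p*q) ^ (k+1) := one_le_pow₀ hpq1.le
    linarith
  -- the two intermediate points
  set L : ℝ := t - 3 * t / c with hLdef
  set M : ℝ := t - 3 * t / (2 * c) with hMdef
  clear_value L M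
  have h3tc : 3 * t / c ≤ t / 2 := arith_3tc hc6 ht0
  have hL0 : 0 < L := by rw [hLdef]; linarith
  have hLM : L ≤ M := by
    rw [hLdef, hMdef]
    have : 3 * t / (2 * c) ≤ 3 * t / c :=
      div_le_div_of_nonneg_left (by linarith) hc0 (by linarith)
    linarith
  have hMt : M ≤ t := by
    rw [hMdef]
    have : 0 ≤ 3 * t / (2 * c) := by positivity
    linarith
  have hML : M - L = 3 * t / (2 * c) := by rw [hLdef, hMdef]; field_simp; ring
  have htM : t - M = 3 * t / (2 * c) := by rw [hMdef]; ring
  -- aj R is small compared to L/2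
  have hajR : aj * R ≤ L / 2 := by
    have h4c2 : 4 * (c - 2) * R ≤ t := arith_ajR hc6 hR htc
    rw [hLdef, hajc]; linarith
  have hL2 : t / 8 ≤ L / 2 := by
    rw [hLdef]
    have : 3 * t / c ≤ 3 * t / 6 :=
      div_le_div_of_nonneg_left (by linarith) (by norm_num) hc6
    linarith
  -- lower bound B for U'' on [L, t]
  set B : ℝ := Cj * (L / 2) ^ β * (Real.log (Real.sqrt t)) ^ γ with hBdef
  clear_value B
  have hrpowL : 0 ≤ (L / 2) ^ β := Real.rpow_nonneg (by positivity) β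
  have hrpowlog : 0 ≤ (Real.log (Real.sqrt t)) ^ γ := Real.rpow_nonneg hlog0 γ
  have hB0 : 0 ≤ B := by rw [hBdef]; positivity
  have hBU'' : ∀ r ∈ Icc L t, B ≤ U'' r := by
    intro r hr
    have hajr : aj * R ≤ r := le_trans (hajR.trans (by linarith)) hr.1
    refine le_trans ?_ (hUj r hajr)
    have hD0 : (0:ℝ) < c * (aj - 1) * R := by
      have : (0:ℝ) < aj - 1 := by linarith
      positivity
    have h1 : L / 2 ≤ r - aj * R := by
      have := hr.1; linarith
    have h2 : Real.sqrt t ≤ (r + (aj ^ 2 - 2) * R) / (c * (aj - 1) * R) := by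
      rw [le_div_iff₀ hD0]
      have hq : Real.sqrt t * (c ^ 2 * R) ≤ t :=
        le_trans (mul_le_mul_of_nonneg_left hstc hst0.le) (le_of_eq hst)
      have hLr : L ≤ r := hr.1
      have hLval : t - 3 * t / c = t * (c - 3) / c := by field_simp
      have hkey : Real.sqrt t * (c * (aj - 1) * R) ≤ L := by
        rw [hajc, hLdef, hLval, le_div_iff₀ hc0]
        exact arith_key hq hc6 (Real.sqrt_nonneg t) hR0
      have haj2 : 0 ≤ (aj ^ 2 - 2) * R := arith_sq4 haj4 hR0
      linarith
    have e1 : (L / 2) ^ β ≤ (r - aj * R) ^ β :=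
      Real.rpow_le_rpow (by positivity) h1 hβ0
    have e2 : (Real.log (Real.sqrt t)) ^ γ
        ≤ (Real.log ((r + (aj ^ 2 - 2) * R) / (c * (aj - 1) * R))) ^ γ :=
      Real.rpow_le_rpow hlog0 (Real.log_le_log hst0 h2) hγ0
    have hrnn : 0 ≤ r - aj * R := le_trans (by positivity) h1
    calc B = Cj * (L / 2) ^ β * (Real.log (Real.sqrt t)) ^ γ := hBdef
      _ ≤ Cj * (r - aj * R) ^ β
          * (Real.log ((r + (aj ^ 2 - 2) * R) / (c * (aj - 1) * R))) ^ γ := by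
          apply mul_le_mul (mul_le_mul_of_nonneg_left e1 hCj.le) e2 hrpowlog
          have := Real.rpow_nonneg hrnn β
          positivity
  -- first integration: lower bound for U' on [M, t]
  have hU'bd : ∀ s ∈ Icc M t, B * (M - L) ≤ U' s := by
    intro s hs
    have hLs : L ≤ s := hLM.trans hs.1
    have h := key_mvt U' U'' hU'' hL0 hLs
      (fun x hx => hBU'' x ⟨hx.1, hx.2.trans hs.2⟩)
    have hUL : 0 ≤ U' L := hU'nonneg L hL0.le
    have hMs : M - L ≤ s - L := by linarith [hs.1]
    have := mul_le_mul_of_nonneg_left hMs hB0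
    linarith
  -- second integration
  have hM0 : 0 < M := lt_of_lt_of_le hL0 hLM
  have h3 := key_mvt U U' hU' hM0 hMt hU'bd
  have hUM : 0 ≤ U M := hUnonneg M hM0.le
  have hUt : B * (M - L) * (t - M) ≤ U t := by linarith
  -- final arithmetic
  have hE1 : -3 * (n : ℝ) - 4 + 3 * ((n : ℝ) - 1) * p / 2 = -3 * β - 7 := by
    rw [hβdef]; ring
  have hE2 : (n : ℝ) + 1 - ((n : ℝ) - 1) * p / 2 = β + 2 := by rw [hβdef]; ring
  rw [hE1, hE2]
  refine le_trans ?_ hUt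
  rw [hML, htM]
  have ht2 : t ^ (β + 2) = t ^ β * t ^ 2 := by
    rw [Real.rpow_add ht0, show (2:ℝ) = ((2:ℕ):ℝ) by norm_num, Real.rpow_natCast]
  have h44 : (4:ℝ) ^ k * 4 ^ k = 16 ^ k := by rw [← mul_pow]; norm_num
  have h16k : (0:ℝ) < (16:ℝ) ^ k := by positivity
  have hprod : 3 * t / (2 * c) * (3 * t / (2 * c)) = t ^ 2 / 16 ^ (k + 1) := by
    rw [hc, show (16:ℝ)^(k+1) = 4^k*4^k*16 by rw [pow_succ, ← h44]]
    have h4k0 : ((4:ℝ)^k) ≠ 0 := by positivity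
    field_simp
    ring
  have hcoef : (2:ℝ) ^ (-3 * β - 7) * t ^ β ≤ (L / 2) ^ β := by
    have e1 : (2:ℝ) ^ (-3 * β - 7) ≤ (2:ℝ) ^ (-3 * β) :=
      Real.rpow_le_rpow_of_exponent_le (by norm_num) (by linarith)
    have e2 : (2:ℝ) ^ (-3 * β) = (8:ℝ) ^ (-β) := by
      rw [show (8:ℝ) = (2:ℝ) ^ ((3:ℕ):ℝ) by norm_num [Real.rpow_natCast],
        ← Real.rpow_mul (by norm_num)]
      ring_nf
    have e3 : (8:ℝ) ^ (-β) * t ^ β = (t / 8) ^ β := by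
      rw [Real.div_rpow ht0.le (by norm_num), Real.rpow_neg (by norm_num)]
      ring
    have e4 : (t / 8) ^ β ≤ (L / 2) ^ β :=
      Real.rpow_le_rpow (by positivity) hL2 hβ0
    calc (2:ℝ) ^ (-3 * β - 7) * t ^ β ≤ (2:ℝ) ^ (-3 * β) * t ^ β :=
          mul_le_mul_of_nonneg_right e1 (Real.rpow_nonneg ht0.le β)
      _ = (t / 8) ^ β := by rw [e2, e3]
      _ ≤ (L / 2) ^ β := e4
  have hpos : 0 ≤ Cj * (Real.log (Real.sqrt t)) ^ γ := by positivity
  have hlast : B * (3 * t / (2 * c)) * (3 * t / (2 * c))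
      = Cj * (Real.log (Real.sqrt t)) ^ γ * (L / 2) ^ β * (t ^ 2 / 16 ^ (k + 1)) := by
    rw [hBdef, mul_assoc, hprod]; ring
  calc Cj * (2:ℝ) ^ (-3 * β - 7) / 16 ^ (k + 1)
        * (Real.log (Real.sqrt t)) ^ γ * t ^ (β + 2)
      = (Cj * (Real.log (Real.sqrt t)) ^ γ) * ((2:ℝ) ^ (-3 * β - 7) * t ^ β)
        * (t ^ 2 / 16 ^ (k + 1)) := by rw [ht2]; ring
    _ ≤ (Cj * (Real.log (Real.sqrt t)) ^ γ) * ((L / 2) ^ β)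
        * (t ^ 2 / 16 ^ (k + 1)) := by
        apply mul_le_mul_of_nonneg_right (mul_le_mul_of_nonneg_left hcoef hpos)
        positivity
    _ = B * (3 * t / (2 * c)) * (3 * t / (2 * c)) := by rw [hlast]
end
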